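/- arXiv:2602.22499 — 11 statements merged into one kernel-verified Lean document; each statement's English description precedes it below -/
import Mathlib

section
/- Reporting only the observed cost savings for the controlled zones 1,…,m overestimates the whole-building cost savings by exactly Σ_{i=1}^m Σ_{j=m+1}^n α_{ij} ∫_0^τ a_j(t) (T_i(t) − T̃_i(t)) dt; that is, Σ_{i=1}^m S_i − S = Σ_{i=1}^m Σ_{j=m+1}^n α_{ij} ∫_0^τ a_j(t) x_i(t) dt. -/
/-!
An uncontrolled zone has the same temperature trajectory in both runs, so its heat balance
forces its power difference `q_j - q̃_j` to equal the change of the heat it receives from its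
neighbours, `∑_{i ≤ m} α_{ji} (T̃_i - T_i)`; the outdoor and the other uncontrolled zones do
not contribute. Integrating against the price `a_j` gives `S_j = -∑_{i ≤ m} α_{ji} ∫ a_j x_i`;
the overestimate is `-∑_{j > m} S_j`, and the symmetry of `α` puts it in the claimed form.
-/

open Finset Filter Topology

theorem sub_eq_sum_of_hasDerivAt_of_eventuallyEq {ι : Type*} {s : Finset ι} {α : ι → ℝ}
    {T Tt : ι → ℝ → ℝ} {i : ι} {t c p pt w : ℝ} (hc : c ≠ 0)
    (hT : HasDerivAt (T i) (((∑ j ∈ s, α j * (T j t - T i t)) + p + w) / c) t)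
    (hTt : HasDerivAt (Tt i) (((∑ j ∈ s, α j * (Tt j t - Tt i t)) + pt + w) / c) t)
    (heq : Tt i =ᶠ[𝓝 t] T i) :
    p - pt = ∑ j ∈ s, α j * (Tt j t - T j t) := by
  have hbalance := (div_left_inj' hc).mp ((hTt.congr_of_eventuallyEq heq.symm).unique hT)
  rw [heq.eq_of_nhds] at hbalance
  simp only [mul_sub, sum_sub_distrib] at hbalance ⊢
  linarith

theorem sum_range_succ_eq_sum_Icc_one {M : Type*} [AddCommMonoid M] {m n : ℕ} (hmn : m ≤ n)
    {f : ℕ → M} (h0 : f 0 = 0) (hf : ∀ j ∈ Icc (m + 1) n, f j = 0) :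
    ∑ j ∈ range (n + 1), f j = ∑ j ∈ Icc 1 m, f j := by
  refine (sum_subset (fun j hj => ?_) fun j hj hjm => ?_).symm
  · simp only [mem_Icc, mem_range] at hj ⊢
    omega
  · simp only [mem_Icc, mem_range, not_and_or, not_le] at hj hjm
    rcases Nat.eq_zero_or_pos j with rfl | hpos
    · exact h0
    · exact hf j (mem_Icc.mpr ⟨by omega, by omega⟩)

theorem sum_Icc_one_sub_sum_Icc_one {G : Type*} [AddCommGroup G] {m n : ℕ} (hmn : m ≤ n)
    (f : ℕ → G) :
    ∑ i ∈ Icc 1 m, f i - ∑ i ∈ Icc 1 n, f i = -∑ i ∈ Icc (m + 1) n, f i := by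
  have hIoc : ∀ k, Icc 1 k = Ioc 0 k := fun k => Icc_add_one_left_eq_Ioc 0 k
  rw [hIoc, hIoc, ← sum_Ioc_consecutive f (Nat.zero_le m) hmn, Icc_add_one_left_eq_Ioc]
  abel

theorem intervalIntegral.integral_mul_sum_const_mul {ι : Type*} (s : Finset ι) {a b : ℝ}
    (g : ℝ → ℝ) (c : ι → ℝ) {f : ι → ℝ → ℝ}
    (hf : ∀ j ∈ s, IntervalIntegrable (fun t => g t * f j t) MeasureTheory.volume a b) :
    ∫ t in a..b, g t * ∑ j ∈ s, c j * f j t = ∑ j ∈ s, c j * ∫ t in a..b, g t * f j t := by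
  simp only [mul_sum, mul_left_comm (g _)]
  rw [integral_finsetSum fun j hj => (hf j hj).const_mul (c j)]
  simp only [integral_const_mul]

theorem controlled_zone_savings_overestimation_general
    (n m : ℕ) (hmn : m ≤ n)
    (τ : ℝ) (hτ : 0 < τ)
    (T Tt q qt w : ℕ → ℝ → ℝ)
    (C : ℕ → ℝ) (α : ℕ → ℕ → ℝ) (a : ℕ → ℝ → ℝ)
    (hC : ∀ i, 0 < C i)
    (hsym : ∀ i j, α i j = α j i)
    (ha : ∀ i, ContDiff ℝ 1 (a i))
    (hdyn : ∀ i ∈ Finset.Icc 1 n, ∀ t ∈ Set.Icc (0 : ℝ) τ,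
      HasDerivAt (T i)
        (((∑ j ∈ Finset.range (n + 1), α i j * (T j t - T i t)) + q i t + w i t) / C i) t)
    (hdynt : ∀ i ∈ Finset.Icc 1 n, ∀ t ∈ Set.Icc (0 : ℝ) τ,
      HasDerivAt (Tt i)
        (((∑ j ∈ Finset.range (n + 1), α i j * (Tt j t - Tt i t)) + qt i t + w i t) / C i) t)
    (hout : ∀ t, Tt 0 t = T 0 t)
    (hunc : ∀ i ∈ Finset.Icc (m + 1) n, ∀ t ∈ Set.Icc (0 : ℝ) τ, Tt i t = T i t) :
    (∑ i ∈ Finset.Icc 1 m, ∫ t in (0 : ℝ)..τ, a i t * (q i t - qt i t))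
      - (∑ i ∈ Finset.Icc 1 n, ∫ t in (0 : ℝ)..τ, a i t * (q i t - qt i t))
      = ∑ i ∈ Finset.Icc 1 m, ∑ j ∈ Finset.Icc (m + 1) n,
          α i j * ∫ t in (0 : ℝ)..τ, a j t * (T i t - Tt i t) := by
  have hIcc_mono : Icc (m + 1) n ⊆ Icc 1 n := Icc_subset_Icc_left (by omega)
  have hpower : ∀ i ∈ Icc (m + 1) n, ∀ t ∈ Set.Ioo 0 τ,
      q i t - qt i t = ∑ j ∈ Icc 1 m, α i j * (Tt j t - T j t) := by
    intro i hi t ht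
    have hnear : Tt i =ᶠ[𝓝 t] T i := eventually_of_mem (Ioo_mem_nhds ht.1 ht.2)
      fun s hs => hunc i hi s (Set.Ioo_subset_Icc_self hs)
    rw [sub_eq_sum_of_hasDerivAt_of_eventuallyEq (hC i).ne'
      (hdyn i (hIcc_mono hi) t (Set.Ioo_subset_Icc_self ht))
      (hdynt i (hIcc_mono hi) t (Set.Ioo_subset_Icc_self ht)) hnear]
    refine sum_range_succ_eq_sum_Icc_one hmn (by simp [hout]) fun j hj => ?_
    simp [hunc j hj t (Set.Ioo_subset_Icc_self ht)]
  have hsavings : ∀ i ∈ Icc (m + 1) n, ∫ t in (0 : ℝ)..τ, a i t * (q i t - qt i t)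
      = ∑ j ∈ Icc 1 m, α i j * ∫ t in (0 : ℝ)..τ, a i t * (Tt j t - T j t) := by
    intro i hi
    rw [intervalIntegral.integral_congr_Ioo_of_le hτ.le fun t ht => by rw [hpower i hi t ht]]
    refine intervalIntegral.integral_mul_sum_const_mul _ _ _ fun j hj => ?_
    have hj : j ∈ Icc 1 n := Icc_subset_Icc_right hmn hj
    refine ContinuousOn.intervalIntegrable ?_
    rw [Set.uIcc_of_le hτ.le]
    have hTc : ContinuousOn (T j) (Set.Icc 0 τ) :=
      fun t ht => (hdyn j hj t ht).continuousAt.continuousWithinAt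
    have hTtc : ContinuousOn (Tt j) (Set.Icc 0 τ) :=
      fun t ht => (hdynt j hj t ht).continuousAt.continuousWithinAt
    exact (ha i).continuous.continuousOn.mul (hTtc.sub hTc)
  rw [sum_Icc_one_sub_sum_Icc_one hmn, sum_congr rfl hsavings, sum_comm, ← sum_neg_distrib]
  refine sum_congr rfl fun i _ => ?_
  rw [← sum_neg_distrib]
  refine sum_congr rfl fun j _ => ?_
  rw [hsym, ← mul_neg, ← intervalIntegral.integral_neg]
  simp only [← mul_neg, neg_sub]

/-- Reporting only the observed cost savings for the controlled
zones `1,…,m` overestimates the whole-building cost savings by exactly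
`Σ_{i=1}^m Σ_{j=m+1}^n α_{ij} ∫_0^τ a_j(t) (T_i(t) − T̃_i(t)) dt`. -/
theorem controlled_zone_savings_overestimation
    (n m : ℕ) (hm : 1 ≤ m) (hmn : m ≤ n)
    (τ : ℝ) (hτ : 0 < τ)
    (T Tt q qt w : ℕ → ℝ → ℝ)
    (C : ℕ → ℝ) (α : ℕ → ℕ → ℝ) (a : ℕ → ℝ → ℝ)
    (hC : ∀ i, 0 < C i)
    (hα : ∀ i j, 0 ≤ α i j)
    (hsym : ∀ i j, α i j = α j i)
    (hq : ∀ i, Continuous (q i)) (hqt : ∀ i, Continuous (qt i))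
    (ha : ∀ i, ContDiff ℝ 1 (a i))
    (hdyn : ∀ i ∈ Finset.Icc 1 n, ∀ t ∈ Set.Icc (0 : ℝ) τ,
      HasDerivAt (T i)
        (((∑ j ∈ Finset.range (n + 1), α i j * (T j t - T i t)) + q i t + w i t) / C i) t)
    (hdynt : ∀ i ∈ Finset.Icc 1 n, ∀ t ∈ Set.Icc (0 : ℝ) τ,
      HasDerivAt (Tt i)
        (((∑ j ∈ Finset.range (n + 1), α i j * (Tt j t - Tt i t)) + qt i t + w i t) / C i) t)
    (hout : ∀ t, Tt 0 t = T 0 t)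
    (hunc : ∀ i ∈ Finset.Icc (m + 1) n, ∀ t ∈ Set.Icc (0 : ℝ) τ, Tt i t = T i t)
    (hinit : ∀ i ∈ Finset.Icc 1 n, Tt i 0 = T i 0)
    (hfin : ∀ i ∈ Finset.Icc 1 n, Tt i τ = T i τ) :
    (∑ i ∈ Finset.Icc 1 m, ∫ t in (0 : ℝ)..τ, a i t * (q i t - qt i t))
      - (∑ i ∈ Finset.Icc 1 n, ∫ t in (0 : ℝ)..τ, a i t * (q i t - qt i t))
      = ∑ i ∈ Finset.Icc 1 m, ∑ j ∈ Finset.Icc (m + 1) n,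
          α i j * ∫ t in (0 : ℝ)..τ, a j t * (T i t - Tt i t) :=
  controlled_zone_savings_overestimation_general n m hmn τ hτ T Tt q qt w C α a hC hsym ha hdyn
    hdynt hout hunc
end

section
/- The whole-building cost savings satisfy the exact formula S = Σ_{i=1}^m ∫_0^τ [ a_i(t) α_{i0} + Σ_{j=1}^n α_{ij}(a_i(t) − a_j(t)) − C_i a_i'(t) ] x_i(t) dt, where a_i' denotes the time derivative of the thermal price a_i. -/
lemma erase_range_succ (n : ℕ) : (Finset.range (n+1)).erase 0 = Finset.Icc 1 n := by
  ext x; simp [Nat.lt_succ_iff, Nat.one_le_iff_ne_zero]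

lemma sym_sum (s : Finset ℕ) (α : ℕ → ℕ → ℝ) (hsym : ∀ i j, α i j = α j i) (a x : ℕ → ℝ) :
    ∑ i ∈ s, a i * ∑ j ∈ s, α i j * (x j - x i)
      = -∑ i ∈ s, (∑ j ∈ s, α i j * (a i - a j)) * x i := by
  have h1 : ∑ i ∈ s, a i * ∑ j ∈ s, α i j * (x j - x i)
      = (∑ i ∈ s, ∑ j ∈ s, a i * α i j * x j) - ∑ i ∈ s, ∑ j ∈ s, a i * α i j * x i := by
    rw [← Finset.sum_sub_distrib]
    refine Finset.sum_congr rfl fun i _ => ?_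
    rw [Finset.mul_sum, ← Finset.sum_sub_distrib]
    exact Finset.sum_congr rfl fun j _ => by ring
  have h2 : (∑ i ∈ s, ∑ j ∈ s, a i * α i j * x j)
      = ∑ i ∈ s, ∑ j ∈ s, a j * α i j * x i := by
    rw [Finset.sum_comm]
    exact Finset.sum_congr rfl fun i _ => Finset.sum_congr rfl fun j _ => by rw [hsym i j]
  have h3 : -∑ i ∈ s, (∑ j ∈ s, α i j * (a i - a j)) * x i
      = (∑ i ∈ s, ∑ j ∈ s, a j * α i j * x i) - ∑ i ∈ s, ∑ j ∈ s, a i * α i j * x i := by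
    rw [← Finset.sum_sub_distrib, ← Finset.sum_neg_distrib]
    refine Finset.sum_congr rfl fun i _ => ?_
    rw [← Finset.sum_sub_distrib, Finset.sum_mul, ← Finset.sum_neg_distrib]
    exact Finset.sum_congr rfl fun j _ => by ring
  rw [h1, h2, h3]

lemma pointwise_id (n m : ℕ) (hmn : m ≤ n)
    (x dq xd av ad Cv : ℕ → ℝ) (α : ℕ → ℕ → ℝ)
    (hsym : ∀ i j, α i j = α j i) (hC : ∀ i, Cv i ≠ 0)
    (hx0 : x 0 = 0)
    (hxz : ∀ i ∈ Finset.Icc (m+1) n, x i = 0)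
    (hxd : ∀ i ∈ Finset.Icc 1 n,
      xd i = ((∑ j ∈ Finset.range (n+1), α i j * (x j - x i)) + dq i) / Cv i) :
    ∑ i ∈ Finset.Icc 1 n, av i * dq i
      = (∑ i ∈ Finset.Icc 1 m,
          (av i * α i 0 + (∑ j ∈ Finset.Icc 1 n, α i j * (av i - av j)) - Cv i * ad i) * x i)
        + ∑ i ∈ Finset.Icc 1 n, Cv i * (ad i * x i + av i * xd i) := by
  -- extend the first RHS sum to Icc 1 n
  have hext : (∑ i ∈ Finset.Icc 1 m,
          (av i * α i 0 + (∑ j ∈ Finset.Icc 1 n, α i j * (av i - av j)) - Cv i * ad i) * x i)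
      = ∑ i ∈ Finset.Icc 1 n,
          (av i * α i 0 + (∑ j ∈ Finset.Icc 1 n, α i j * (av i - av j)) - Cv i * ad i) * x i := by
    refine Finset.sum_subset (Finset.Icc_subset_Icc_right hmn) fun i hi him => ?_
    have : x i = 0 := by
      refine hxz i ?_
      simp only [Finset.mem_Icc] at hi him ⊢
      omega
    rw [this, mul_zero]
  rw [hext]
  -- per-term rewriting of av i * dq i
  have hterm : ∀ i ∈ Finset.Icc 1 n,
      av i * dq i = (Cv i * (ad i * x i + av i * xd i)
          + (av i * α i 0 - Cv i * ad i) * x i)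
        - av i * (∑ j ∈ Finset.Icc 1 n, α i j * (x j - x i)) := by
    intro i hi
    have h := hxd i hi
    have hdq : dq i = Cv i * xd i - ∑ j ∈ Finset.range (n+1), α i j * (x j - x i) := by
      rw [eq_div_iff (hC i)] at h
      linear_combination -h
    have hsplit : (∑ j ∈ Finset.range (n+1), α i j * (x j - x i))
        = (∑ j ∈ Finset.Icc 1 n, α i j * (x j - x i)) - α i 0 * x i := by
      rw [← erase_range_succ, ← Finset.sum_erase_add _ _ (by simp : 0 ∈ Finset.range (n+1)),
        hx0]
      ring
    rw [hdq, hsplit]; ring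
  calc ∑ i ∈ Finset.Icc 1 n, av i * dq i
      = ∑ i ∈ Finset.Icc 1 n, (Cv i * (ad i * x i + av i * xd i)
          + (av i * α i 0 - Cv i * ad i) * x i
          - av i * (∑ j ∈ Finset.Icc 1 n, α i j * (x j - x i))) :=
        Finset.sum_congr rfl hterm
    _ = (∑ i ∈ Finset.Icc 1 n, (Cv i * (ad i * x i + av i * xd i)
          + (av i * α i 0 - Cv i * ad i) * x i))
        - ∑ i ∈ Finset.Icc 1 n, av i * (∑ j ∈ Finset.Icc 1 n, α i j * (x j - x i)) :=
        Finset.sum_sub_distrib _ _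
    _ = (∑ i ∈ Finset.Icc 1 n, (Cv i * (ad i * x i + av i * xd i)
          + (av i * α i 0 - Cv i * ad i) * x i))
        + ∑ i ∈ Finset.Icc 1 n, (∑ j ∈ Finset.Icc 1 n, α i j * (av i - av j)) * x i := by
        rw [sym_sum _ α hsym av x]; ring
    _ = _ := by
        rw [← Finset.sum_add_distrib, ← Finset.sum_add_distrib]
        exact Finset.sum_congr rfl fun i _ => by ring

/-- The whole-building cost savings satisfy the exact formula
`S = Σ_{i=1}^m ∫_0^τ [ a_i α_{i0} + Σ_{j=1}^n α_{ij}(a_i − a_j) − C_i a_i' ] x_i dt`. -/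
theorem whole_building_savings_formula_price_derivative
    (n m : ℕ) (hm : 1 ≤ m) (hmn : m ≤ n)
    (τ : ℝ) (hτ : 0 < τ)
    (T Tt q qt w : ℕ → ℝ → ℝ)
    (C : ℕ → ℝ) (α : ℕ → ℕ → ℝ) (a : ℕ → ℝ → ℝ)
    (hC : ∀ i, 0 < C i)
    (hα : ∀ i j, 0 ≤ α i j)
    (hsym : ∀ i j, α i j = α j i)
    (hq : ∀ i, Continuous (q i)) (hqt : ∀ i, Continuous (qt i))
    (ha : ∀ i, ContDiff ℝ 1 (a i))
    (hdyn : ∀ i ∈ Finset.Icc 1 n, ∀ t ∈ Set.Icc (0 : ℝ) τ,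
      HasDerivAt (T i)
        (((∑ j ∈ Finset.range (n + 1), α i j * (T j t - T i t)) + q i t + w i t) / C i) t)
    (hdynt : ∀ i ∈ Finset.Icc 1 n, ∀ t ∈ Set.Icc (0 : ℝ) τ,
      HasDerivAt (Tt i)
        (((∑ j ∈ Finset.range (n + 1), α i j * (Tt j t - Tt i t)) + qt i t + w i t) / C i) t)
    (hout : ∀ t, Tt 0 t = T 0 t)
    (hunc : ∀ i ∈ Finset.Icc (m + 1) n, ∀ t ∈ Set.Icc (0 : ℝ) τ, Tt i t = T i t)
    (hinit : ∀ i ∈ Finset.Icc 1 n, Tt i 0 = T i 0)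
    (hfin : ∀ i ∈ Finset.Icc 1 n, Tt i τ = T i τ) :
    (∑ i ∈ Finset.Icc 1 n, ∫ t in (0 : ℝ)..τ, a i t * (q i t - qt i t))
      = ∑ i ∈ Finset.Icc 1 m, ∫ t in (0 : ℝ)..τ,
          (a i t * α i 0 + (∑ j ∈ Finset.Icc 1 n, α i j * (a i t - a j t))
            - C i * deriv (a i) t) * (T i t - Tt i t) := by
  have huIcc : Set.uIcc (0:ℝ) τ = Set.Icc 0 τ := Set.uIcc_of_le hτ.le
  have haC : ∀ i, Continuous (a i) := fun i => (ha i).continuous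
  have haD : ∀ i, Continuous (deriv (a i)) := fun i => (ha i).continuous_deriv le_rfl
  have haH : ∀ i t, HasDerivAt (a i) (deriv (a i) t) t :=
    fun i t => ((ha i).differentiable one_ne_zero t).hasDerivAt
  -- derivative of differences
  have hXd : ∀ i ∈ Finset.Icc 1 n, ∀ t ∈ Set.Icc (0:ℝ) τ,
      HasDerivAt (fun s => T i s - Tt i s)
        (((∑ j ∈ Finset.range (n+1), α i j * ((T j t - Tt j t) - (T i t - Tt i t)))
          + (q i t - qt i t)) / C i) t := by
    intro i hi t ht
    have h : HasDerivAt (fun s => T i s - Tt i s) (_ - _) t := (hdyn i hi t ht).sub (hdynt i hi t ht)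
    convert h using 1
    rw [div_sub_div_same]
    congr 1
    have hnum : (∑ j ∈ Finset.range (n+1), α i j * ((T j t - Tt j t) - (T i t - Tt i t)))
        = (∑ j ∈ Finset.range (n+1), α i j * (T j t - T i t))
          - ∑ j ∈ Finset.range (n+1), α i j * (Tt j t - Tt i t) := by
      rw [← Finset.sum_sub_distrib]
      exact Finset.sum_congr rfl fun j _ => by ring
    rw [hnum]; ring
  -- continuity of the differences on Icc
  have hXc : ∀ j ∈ Finset.range (n+1),
      ContinuousOn (fun s => T j s - Tt j s) (Set.Icc (0:ℝ) τ) := by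
    intro j hj
    rcases Nat.eq_zero_or_pos j with rfl | hj1
    · have : (fun s => T 0 s - Tt 0 s) = fun _ => (0:ℝ) := funext fun s => by rw [hout s]; ring
      rw [this]; exact continuousOn_const
    · have hj' : j ∈ Finset.Icc 1 n := by
        simp only [Finset.mem_range, Nat.lt_succ_iff] at hj
        simp only [Finset.mem_Icc]; omega
      exact fun t ht => ((hXd j hj' t ht).continuousAt).continuousWithinAt
  -- continuity of the derivative expression on Icc
  have hDc : ∀ i ∈ Finset.Icc 1 n,
      ContinuousOn (fun t => ((∑ j ∈ Finset.range (n+1),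
          α i j * ((T j t - Tt j t) - (T i t - Tt i t)))
        + (q i t - qt i t)) / C i) (Set.Icc (0:ℝ) τ) := by
    intro i hi
    have hiR : i ∈ Finset.range (n+1) := by
      simp only [Finset.mem_Icc] at hi; simp only [Finset.mem_range]; omega
    apply ContinuousOn.div_const
    apply ContinuousOn.add
    · apply continuousOn_finset_sum
      intro j hj
      exact continuousOn_const.mul ((hXc j hj).sub (hXc i hiR))
    · exact ((hq i).continuousOn).sub ((hqt i).continuousOn)
  -- the total-derivative function Φ' and its antiderivative Φ
  set P : ℝ → ℝ := fun t => ∑ i ∈ Finset.Icc 1 n, C i * (deriv (a i) t * (T i t - Tt i t)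
      + a i t * (((∑ j ∈ Finset.range (n+1),
          α i j * ((T j t - Tt j t) - (T i t - Tt i t)))
        + (q i t - qt i t)) / C i)) with hPdef
  set G : ℝ → ℝ := fun t => ∑ i ∈ Finset.Icc 1 m,
      (a i t * α i 0 + (∑ j ∈ Finset.Icc 1 n, α i j * (a i t - a j t))
        - C i * deriv (a i) t) * (T i t - Tt i t) with hGdef
  have hΦd : ∀ t ∈ Set.Icc (0:ℝ) τ,
      HasDerivAt (fun s => ∑ i ∈ Finset.Icc 1 n, C i * (a i s * (T i s - Tt i s))) (P t) t := by
    intro t ht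
    exact HasDerivAt.fun_sum fun i hi => ((haH i t).mul (hXd i hi t ht)).const_mul (C i)
  -- pointwise identity
  have hpt : ∀ t ∈ Set.Icc (0:ℝ) τ,
      (∑ i ∈ Finset.Icc 1 n, a i t * (q i t - qt i t)) = G t + P t := by
    intro t ht
    refine pointwise_id n m hmn (fun i => T i t - Tt i t) (fun i => q i t - qt i t)
      (fun i => ((∑ j ∈ Finset.range (n+1),
          α i j * ((T j t - Tt j t) - (T i t - Tt i t)))
        + (q i t - qt i t)) / C i)
      (fun i => a i t) (fun i => deriv (a i) t) C α hsym (fun i => (hC i).ne')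
      (show T 0 t - Tt 0 t = 0 by rw [hout t]; ring)
      (fun i hi => show T i t - Tt i t = 0 by rw [hunc i hi t ht]; ring)
      (fun i hi => rfl)
  -- integrability facts
  have hIG : IntervalIntegrable G MeasureTheory.volume 0 τ := by
    apply ContinuousOn.intervalIntegrable
    rw [huIcc]
    apply continuousOn_finset_sum
    intro i hi
    have hi' : i ∈ Finset.Icc 1 n := Finset.Icc_subset_Icc_right hmn hi
    have hiR : i ∈ Finset.range (n+1) := by
      simp only [Finset.mem_Icc] at hi'; simp only [Finset.mem_range]; omega
    apply ContinuousOn.mul _ (hXc i hiR)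
    apply ContinuousOn.sub
    apply ContinuousOn.add
    · exact ((haC i).continuousOn).mul continuousOn_const
    · apply continuousOn_finset_sum
      intro j hj
      exact continuousOn_const.mul (((haC i).continuousOn).sub ((haC j).continuousOn))
    · exact continuousOn_const.mul ((haD i).continuousOn)
  have hIP : IntervalIntegrable P MeasureTheory.volume 0 τ := by
    apply ContinuousOn.intervalIntegrable
    rw [huIcc]
    apply continuousOn_finset_sum
    intro i hi
    have hiR : i ∈ Finset.range (n+1) := by
      simp only [Finset.mem_Icc] at hi; simp only [Finset.mem_range]; omega
    exact continuousOn_const.mul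
      ((((haD i).continuousOn).mul (hXc i hiR)).add
        (((haC i).continuousOn).mul (hDc i hi)))
  -- main computation
  have step1 : (∑ i ∈ Finset.Icc 1 n, ∫ t in (0:ℝ)..τ, a i t * (q i t - qt i t))
      = ∫ t in (0:ℝ)..τ, ∑ i ∈ Finset.Icc 1 n, a i t * (q i t - qt i t) := by
    refine (intervalIntegral.integral_finset_sum fun i hi => ?_).symm
    exact (((haC i).mul ((hq i).sub (hqt i)))).intervalIntegrable 0 τ
  have step2 : (∫ t in (0:ℝ)..τ, ∑ i ∈ Finset.Icc 1 n, a i t * (q i t - qt i t))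
      = ∫ t in (0:ℝ)..τ, (G t + P t) := by
    apply intervalIntegral.integral_congr
    rw [huIcc]
    exact fun t ht => hpt t ht
  have step3 : (∫ t in (0:ℝ)..τ, (G t + P t))
      = (∫ t in (0:ℝ)..τ, G t) + ∫ t in (0:ℝ)..τ, P t :=
    intervalIntegral.integral_add hIG hIP
  have step4 : (∫ t in (0:ℝ)..τ, P t) = 0 := by
    rw [intervalIntegral.integral_eq_sub_of_hasDerivAt
      (fun t ht => hΦd t (huIcc ▸ ht)) hIP]
    have h0 : ∀ i ∈ Finset.Icc 1 n, C i * (a i 0 * (T i 0 - Tt i 0)) = 0 := by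
      intro i hi; rw [hinit i hi]; ring
    have hτ' : ∀ i ∈ Finset.Icc 1 n, C i * (a i τ * (T i τ - Tt i τ)) = 0 := by
      intro i hi; rw [hfin i hi]; ring
    rw [Finset.sum_congr rfl h0, Finset.sum_congr rfl hτ']
    simp
  have step5 : (∫ t in (0:ℝ)..τ, G t)
      = ∑ i ∈ Finset.Icc 1 m, ∫ t in (0:ℝ)..τ,
          (a i t * α i 0 + (∑ j ∈ Finset.Icc 1 n, α i j * (a i t - a j t))
            - C i * deriv (a i) t) * (T i t - Tt i t) := by
    refine intervalIntegral.integral_finset_sum fun i hi => ?_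
    have hi' : i ∈ Finset.Icc 1 n := Finset.Icc_subset_Icc_right hmn hi
    have hiR : i ∈ Finset.range (n+1) := by
      simp only [Finset.mem_Icc] at hi'; simp only [Finset.mem_range]; omega
    apply ContinuousOn.intervalIntegrable
    rw [huIcc]
    apply ContinuousOn.mul _ (hXc i hiR)
    apply ContinuousOn.sub
    apply ContinuousOn.add
    · exact ((haC i).continuousOn).mul continuousOn_const
    · apply continuousOn_finset_sum
      intro j hj
      exact continuousOn_const.mul (((haC i).continuousOn).sub ((haC j).continuousOn))
    · exact continuousOn_const.mul ((haD i).continuousOn)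
  rw [step1, step2, step3, step4, add_zero, step5]
end

section
/- The whole-building cost savings satisfy the exact formula S = Σ_{i=1}^m ∫_0^τ [ a_i(t) α_{i0} x_i(t) + Σ_{j=1}^n α_{ij}(a_i(t) − a_j(t)) x_i(t) + C_i a_i(t) x_i'(t) ] dt, where x_i' denotes the time derivative of x_i = T_i − T̃_i. -/
lemma sum_Icc_one_split {M : Type*} [AddCommMonoid M] (f : ℕ → M) (m n : ℕ) (h : m ≤ n) :
    ∑ i ∈ Finset.Icc 1 n, f i
      = (∑ i ∈ Finset.Icc 1 m, f i) + ∑ i ∈ Finset.Icc (m+1) n, f i := by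
  have e : ∀ k, Finset.Icc 1 k = Finset.Ioc 0 k := fun k => by
    rw [← Finset.Icc_add_one_left_eq_Ioc, zero_add]
  rw [e, e, Finset.Icc_add_one_left_eq_Ioc, Finset.sum_Ioc_consecutive _ (Nat.zero_le m) h]

lemma sum_range_succ_split {M : Type*} [AddCommMonoid M] (f : ℕ → M) (n : ℕ) :
    ∑ j ∈ Finset.range (n+1), f j = f 0 + ∑ j ∈ Finset.Icc 1 n, f j := by
  rw [Finset.range_eq_Ico, Finset.Ico_add_one_right_eq_Icc, Finset.Icc_eq_cons_Ioc (Nat.zero_le n),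
    Finset.sum_cons, ← Finset.Icc_add_one_left_eq_Ioc, zero_add]

/-- The whole-building cost savings satisfy the exact formula
`S = Σ_{i=1}^m ∫_0^τ [ a_i α_{i0} x_i + Σ_{j=1}^n α_{ij}(a_i − a_j) x_i + C_i a_i x_i' ] dt`. -/
theorem whole_building_savings_formula_temperature_derivative
    (n m : ℕ) (hm : 1 ≤ m) (hmn : m ≤ n)
    (τ : ℝ) (hτ : 0 < τ)
    (T Tt q qt w : ℕ → ℝ → ℝ)
    (C : ℕ → ℝ) (α : ℕ → ℕ → ℝ) (a : ℕ → ℝ → ℝ)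
    (hC : ∀ i, 0 < C i)
    (hα : ∀ i j, 0 ≤ α i j)
    (hsym : ∀ i j, α i j = α j i)
    (hq : ∀ i, Continuous (q i)) (hqt : ∀ i, Continuous (qt i))
    (ha : ∀ i, ContDiff ℝ 1 (a i))
    (hdyn : ∀ i ∈ Finset.Icc 1 n, ∀ t ∈ Set.Icc (0 : ℝ) τ,
      HasDerivAt (T i)
        (((∑ j ∈ Finset.range (n + 1), α i j * (T j t - T i t)) + q i t + w i t) / C i) t)
    (hdynt : ∀ i ∈ Finset.Icc 1 n, ∀ t ∈ Set.Icc (0 : ℝ) τ,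
      HasDerivAt (Tt i)
        (((∑ j ∈ Finset.range (n + 1), α i j * (Tt j t - Tt i t)) + qt i t + w i t) / C i) t)
    (hout : ∀ t, Tt 0 t = T 0 t)
    (hunc : ∀ i ∈ Finset.Icc (m + 1) n, ∀ t ∈ Set.Icc (0 : ℝ) τ, Tt i t = T i t)
    (hinit : ∀ i ∈ Finset.Icc 1 n, Tt i 0 = T i 0)
    (hfin : ∀ i ∈ Finset.Icc 1 n, Tt i τ = T i τ) :
    (∑ i ∈ Finset.Icc 1 n, ∫ t in (0 : ℝ)..τ, a i t * (q i t - qt i t))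
      = ∑ i ∈ Finset.Icc 1 m, ∫ t in (0 : ℝ)..τ,
          (a i t * α i 0 * (T i t - Tt i t)
            + (∑ j ∈ Finset.Icc 1 n, α i j * (a i t - a j t)) * (T i t - Tt i t)
            + C i * a i t * deriv (fun s => T i s - Tt i s) t) := by
  have hCne : ∀ i, C i ≠ 0 := fun i => (hC i).ne'
  -- derivative of x i = T i - Tt i
  have hx : ∀ i ∈ Finset.Icc 1 n, ∀ t ∈ Set.Icc (0:ℝ) τ,
      HasDerivAt (fun s => T i s - Tt i s)
        (((∑ j ∈ Finset.range (n+1), α i j * ((T j t - Tt j t) - (T i t - Tt i t)))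
          + (q i t - qt i t)) / C i) t := by
    intro i hi t ht
    have h := (hdyn i hi t ht).sub (hdynt i hi t ht)
    convert h using 1
    case e'_4 => rfl
    case e'_5 => rfl
    case e'_8 => rfl
    rw [div_sub_div_same]
    congr 1
    have hs : (∑ j ∈ Finset.range (n+1), α i j * ((T j t - Tt j t) - (T i t - Tt i t)))
        = (∑ j ∈ Finset.range (n+1), α i j * (T j t - T i t))
          - ∑ j ∈ Finset.range (n+1), α i j * (Tt j t - Tt i t) := by
      rw [← Finset.sum_sub_distrib]
      exact Finset.sum_congr rfl fun j _ => by ring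
    rw [hs]; ring
  have hderiv : ∀ i ∈ Finset.Icc 1 n, ∀ t ∈ Set.Icc (0:ℝ) τ,
      deriv (fun s => T i s - Tt i s) t
        = ((∑ j ∈ Finset.range (n+1), α i j * ((T j t - Tt j t) - (T i t - Tt i t)))
          + (q i t - qt i t)) / C i := fun i hi t ht => (hx i hi t ht).deriv
  have hqeq : ∀ i ∈ Finset.Icc 1 n, ∀ t ∈ Set.Icc (0:ℝ) τ,
      q i t - qt i t = C i * deriv (fun s => T i s - Tt i s) t
        - ∑ j ∈ Finset.range (n+1), α i j * ((T j t - Tt j t) - (T i t - Tt i t)) := by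
    intro i hi t ht
    rw [hderiv i hi t ht, mul_div_assoc', mul_div_cancel_left₀ _ (hCne i)]
    ring
  -- pointwise identity on the open interval
  have hpt : ∀ t ∈ Set.Ioo (0:ℝ) τ,
      (∑ i ∈ Finset.Icc 1 n, a i t * (q i t - qt i t))
      = ∑ i ∈ Finset.Icc 1 m,
          (a i t * α i 0 * (T i t - Tt i t)
            + (∑ j ∈ Finset.Icc 1 n, α i j * (a i t - a j t)) * (T i t - Tt i t)
            + C i * a i t * deriv (fun s => T i s - Tt i s) t) := by
    intro t ht
    have ht' : t ∈ Set.Icc (0:ℝ) τ := Set.Ioo_subset_Icc_self ht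
    have step1 : (∑ i ∈ Finset.Icc 1 n, a i t * (q i t - qt i t))
        = ∑ i ∈ Finset.Icc 1 n,
            (a i t * α i 0 * (T i t - Tt i t)
              + (∑ j ∈ Finset.Icc 1 n, α i j * a i t * ((T i t - Tt i t) - (T j t - Tt j t)))
              + C i * a i t * deriv (fun s => T i s - Tt i s) t) := by
      refine Finset.sum_congr rfl fun i hi => ?_
      rw [hqeq i hi t ht',
        sum_range_succ_split (fun j => α i j * ((T j t - Tt j t) - (T i t - Tt i t))) n]
      have h0 : T 0 t - Tt 0 t = 0 := by rw [hout]; ring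
      rw [h0]
      have hS : a i t * (∑ j ∈ Finset.Icc 1 n, α i j * ((T j t - Tt j t) - (T i t - Tt i t)))
          + (∑ j ∈ Finset.Icc 1 n, α i j * a i t * ((T i t - Tt i t) - (T j t - Tt j t))) = 0 := by
        rw [Finset.mul_sum, ← Finset.sum_add_distrib]
        exact Finset.sum_eq_zero fun j _ => by ring
      linear_combination -hS
    -- double sum symmetry swap
    have hswap0 : ∑ i ∈ Finset.Icc 1 n, ∑ j ∈ Finset.Icc 1 n,
          α i j * a i t * (T j t - Tt j t)
        = ∑ i ∈ Finset.Icc 1 n, ∑ j ∈ Finset.Icc 1 n,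
          α i j * a j t * (T i t - Tt i t) := by
      rw [Finset.sum_comm]
      exact Finset.sum_congr rfl fun i _ => Finset.sum_congr rfl fun j _ => by rw [hsym]
    have hB : ∑ i ∈ Finset.Icc 1 n, ∑ j ∈ Finset.Icc 1 n,
          α i j * a i t * ((T i t - Tt i t) - (T j t - Tt j t))
        = ∑ i ∈ Finset.Icc 1 n,
            (∑ j ∈ Finset.Icc 1 n, α i j * (a i t - a j t)) * (T i t - Tt i t) := by
      have l1 : ∀ i ∈ Finset.Icc 1 n,
          ∑ j ∈ Finset.Icc 1 n, α i j * a i t * ((T i t - Tt i t) - (T j t - Tt j t))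
          = (∑ j ∈ Finset.Icc 1 n, α i j * a i t * (T i t - Tt i t))
            - ∑ j ∈ Finset.Icc 1 n, α i j * a i t * (T j t - Tt j t) := fun i _ => by
        rw [← Finset.sum_sub_distrib]
        exact Finset.sum_congr rfl fun j _ => by ring
      have r1 : ∀ i ∈ Finset.Icc 1 n,
          (∑ j ∈ Finset.Icc 1 n, α i j * (a i t - a j t)) * (T i t - Tt i t)
          = (∑ j ∈ Finset.Icc 1 n, α i j * a i t * (T i t - Tt i t))
            - ∑ j ∈ Finset.Icc 1 n, α i j * a j t * (T i t - Tt i t) := fun i _ => by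
        rw [Finset.sum_mul, ← Finset.sum_sub_distrib]
        exact Finset.sum_congr rfl fun j _ => by ring
      rw [Finset.sum_congr rfl l1, Finset.sum_congr rfl r1, Finset.sum_sub_distrib,
        Finset.sum_sub_distrib, hswap0]
    have step2 : (∑ i ∈ Finset.Icc 1 n, a i t * (q i t - qt i t))
        = ∑ i ∈ Finset.Icc 1 n,
            (a i t * α i 0 * (T i t - Tt i t)
              + (∑ j ∈ Finset.Icc 1 n, α i j * (a i t - a j t)) * (T i t - Tt i t)
              + C i * a i t * deriv (fun s => T i s - Tt i s) t) := by
      rw [step1, Finset.sum_add_distrib, Finset.sum_add_distrib, hB,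
        ← Finset.sum_add_distrib, ← Finset.sum_add_distrib]
    have hz : ∀ i ∈ Finset.Icc (m+1) n,
        (a i t * α i 0 * (T i t - Tt i t)
          + (∑ j ∈ Finset.Icc 1 n, α i j * (a i t - a j t)) * (T i t - Tt i t)
          + C i * a i t * deriv (fun s => T i s - Tt i s) t) = 0 := by
      intro i hi
      have hx0 : T i t - Tt i t = 0 := by rw [hunc i hi t ht']; ring
      have hd0 : deriv (fun s => T i s - Tt i s) t = 0 := by
        have hev : (fun s => T i s - Tt i s) =ᶠ[nhds t] fun _ => (0:ℝ) := by
          filter_upwards [Ioo_mem_nhds ht.1 ht.2] with s hs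
          rw [hunc i hi s (Set.Ioo_subset_Icc_self hs)]; ring
        rw [hev.deriv_eq, deriv_const]
      rw [hx0, hd0]; ring
    rw [step2, sum_Icc_one_split _ m n hmn, Finset.sum_eq_zero hz, add_zero]
  -- continuity facts
  have hTc : ∀ j ∈ Finset.range (n+1),
      ContinuousOn (fun t => T j t - Tt j t) (Set.Icc (0:ℝ) τ) := by
    intro j hj
    rcases Nat.eq_zero_or_pos j with rfl | hj1
    · have : (fun t => T 0 t - Tt 0 t) = fun _ => (0:ℝ) := funext fun t => by rw [hout]; ring
      rw [this]; exact continuousOn_const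
    · have hj' : j ∈ Finset.Icc 1 n :=
        Finset.mem_Icc.mpr ⟨hj1, Nat.lt_succ_iff.mp (Finset.mem_range.mp hj)⟩
      intro t ht
      exact ((hx j hj' t ht).continuousAt).continuousWithinAt
  have hdc : ∀ i ∈ Finset.Icc 1 n,
      ContinuousOn (deriv (fun s => T i s - Tt i s)) (Set.Icc (0:ℝ) τ) := by
    intro i hi
    have hiR : i ∈ Finset.range (n+1) := by
      rw [Finset.mem_range, Nat.lt_succ_iff]
      exact (Finset.mem_Icc.mp hi).2
    apply ContinuousOn.congr (f := fun t =>
      ((∑ j ∈ Finset.range (n+1), α i j * ((T j t - Tt j t) - (T i t - Tt i t)))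
        + (q i t - qt i t)) / C i)
    · apply ContinuousOn.div_const
      apply ContinuousOn.add
      · apply continuousOn_finset_sum
        intro j hj
        exact continuousOn_const.mul ((hTc j hj).sub (hTc i hiR))
      · exact ((hq i).continuousOn).sub ((hqt i).continuousOn)
    · intro t ht
      exact hderiv i hi t ht
  -- integrability
  have hfint : ∀ i ∈ Finset.Icc 1 n,
      IntervalIntegrable (fun t => a i t * (q i t - qt i t)) MeasureTheory.volume 0 τ :=
    fun i _ => (((ha i).continuous).mul ((hq i).sub (hqt i))).intervalIntegrable _ _
  have hgint : ∀ i ∈ Finset.Icc 1 m,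
      IntervalIntegrable (fun t =>
        a i t * α i 0 * (T i t - Tt i t)
          + (∑ j ∈ Finset.Icc 1 n, α i j * (a i t - a j t)) * (T i t - Tt i t)
          + C i * a i t * deriv (fun s => T i s - Tt i s) t) MeasureTheory.volume 0 τ := by
    intro i hi
    have hi' : i ∈ Finset.Icc 1 n := Finset.Icc_subset_Icc_right hmn hi
    have hiR : i ∈ Finset.range (n+1) := by
      rw [Finset.mem_range, Nat.lt_succ_iff]
      exact (Finset.mem_Icc.mp hi').2
    apply ContinuousOn.intervalIntegrable
    rw [Set.uIcc_of_le hτ.le]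
    apply ContinuousOn.add
    apply ContinuousOn.add
    · exact (((ha i).continuous.continuousOn).mul continuousOn_const).mul (hTc i hiR)
    · refine ContinuousOn.mul ?_ (hTc i hiR)
      apply continuousOn_finset_sum
      intro j _
      exact continuousOn_const.mul
        (((ha i).continuous.continuousOn).sub ((ha j).continuous.continuousOn))
    · exact (continuousOn_const.mul ((ha i).continuous.continuousOn)).mul (hdc i hi')
  -- finish
  rw [← intervalIntegral.integral_finset_sum hfint, ← intervalIntegral.integral_finset_sum hgint]
  apply intervalIntegral.integral_congr_ae
  have h1 : ∀ᵐ (t:ℝ), t ≠ τ := by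
    rw [MeasureTheory.ae_iff]
    simp
  filter_upwards [h1] with t htne htmem
  rw [Set.uIoc_of_le hτ.le] at htmem
  exact hpt t ⟨htmem.1, lt_of_le_of_ne htmem.2 htne⟩
end

section
/- For every zone i = 1,…,n, the cumulative cost savings in zone i satisfy S_i = −C_i ∫_0^τ a_i'(t) x_i(t) dt + Σ_{j=0}^n α_{ij} ∫_0^τ a_i(t) (x_i(t) − x_j(t)) dt, where a_i' denotes the time derivative of a_i and x_0(t) = 0. -/
/-- For every zone `i = 1,…,n`, the cumulative cost savings in zone
`i` satisfy `S_i = −C_i ∫_0^τ a_i'(t) x_i(t) dt + Σ_{j=0}^n α_{ij} ∫_0^τ a_i(t)(x_i − x_j) dt`,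
where `x_0 = 0`. -/
theorem zone_savings_after_integration_by_parts
    (n : ℕ)
    (τ : ℝ) (hτ : 0 < τ)
    (T Tt q qt w : ℕ → ℝ → ℝ)
    (C : ℕ → ℝ) (α : ℕ → ℕ → ℝ) (a : ℕ → ℝ → ℝ)
    (hC : ∀ i, 0 < C i)
    (hα : ∀ i j, 0 ≤ α i j)
    (hsym : ∀ i j, α i j = α j i)
    (hq : ∀ i, Continuous (q i)) (hqt : ∀ i, Continuous (qt i))
    (ha : ∀ i, ContDiff ℝ 1 (a i))
    (hdyn : ∀ i ∈ Finset.Icc 1 n, ∀ t ∈ Set.Icc (0 : ℝ) τ,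
      HasDerivAt (T i)
        (((∑ j ∈ Finset.range (n + 1), α i j * (T j t - T i t)) + q i t + w i t) / C i) t)
    (hdynt : ∀ i ∈ Finset.Icc 1 n, ∀ t ∈ Set.Icc (0 : ℝ) τ,
      HasDerivAt (Tt i)
        (((∑ j ∈ Finset.range (n + 1), α i j * (Tt j t - Tt i t)) + qt i t + w i t) / C i) t)
    (hout : ∀ t, Tt 0 t = T 0 t)
    (hinit : ∀ i ∈ Finset.Icc 1 n, Tt i 0 = T i 0)
    (hfin : ∀ i ∈ Finset.Icc 1 n, Tt i τ = T i τ) :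
    ∀ i ∈ Finset.Icc 1 n,
      (∫ t in (0 : ℝ)..τ, a i t * (q i t - qt i t))
        = -(C i * ∫ t in (0 : ℝ)..τ, deriv (a i) t * (T i t - Tt i t))
          + ∑ j ∈ Finset.range (n + 1),
              α i j * ∫ t in (0 : ℝ)..τ,
                a i t * ((T i t - Tt i t) - (T j t - Tt j t)) := by
  intro i hi
  obtain ⟨hi1, hin⟩ := Finset.mem_Icc.mp hi
  have hCne : C i ≠ 0 := (hC i).ne'
  have huIcc : Set.uIcc (0:ℝ) τ = Set.Icc 0 τ := Set.uIcc_of_le hτ.le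
  set X : ℕ → ℝ → ℝ := fun j t => T j t - Tt j t with hX
  have hX0fun : X 0 = fun _ => (0:ℝ) := by
    funext t; simp [hX, hout t]
  have hXcont : ∀ j ∈ Finset.range (n+1), ContinuousOn (X j) (Set.Icc 0 τ) := by
    intro j hj
    rcases Nat.eq_zero_or_pos j with h0 | hpos
    · subst h0; rw [hX0fun]; exact continuousOn_const
    · have hjI : j ∈ Finset.Icc 1 n :=
        Finset.mem_Icc.mpr ⟨hpos, Nat.lt_succ_iff.mp (Finset.mem_range.mp hj)⟩
      intro t ht
      exact (((hdyn j hjI t ht).sub (hdynt j hjI t ht)).continuousAt).continuousWithinAt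
  have hiRange : i ∈ Finset.range (n+1) := Finset.mem_range.mpr (Nat.lt_succ_of_le hin)
  set g : ℝ → ℝ := fun t =>
    ((∑ j ∈ Finset.range (n+1), α i j * (X j t - X i t)) + (q i t - qt i t)) / C i with hgdef
  have hsumeq : ∀ t : ℝ, (∑ j ∈ Finset.range (n+1), α i j * (T j t - T i t))
      - (∑ j ∈ Finset.range (n+1), α i j * (Tt j t - Tt i t))
      = ∑ j ∈ Finset.range (n+1), α i j * (X j t - X i t) := by
    intro t
    rw [← Finset.sum_sub_distrib]
    exact Finset.sum_congr rfl fun j _ => by simp only [hX]; ring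
  have hgderiv : ∀ t ∈ Set.Icc (0:ℝ) τ, HasDerivAt (X i) (g t) t := by
    intro t ht
    have h := (hdyn i hi t ht).sub (hdynt i hi t ht)
    have e : ((∑ j ∈ Finset.range (n+1), α i j * (T j t - T i t)) + q i t + w i t) / C i
        - ((∑ j ∈ Finset.range (n+1), α i j * (Tt j t - Tt i t)) + qt i t + w i t) / C i
        = g t := by
      rw [hgdef, div_sub_div_same]
      congr 1
      rw [← hsumeq t]; ring
    rw [← e]
    exact h
  have haC : Continuous (a i) := (ha i).continuous
  have haD : Continuous (deriv (a i)) := (ha i).continuous_deriv le_rfl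
  have hqc : Continuous (fun t => q i t - qt i t) := (hq i).sub (hqt i)
  have hgcont : ContinuousOn g (Set.Icc 0 τ) := by
    apply ContinuousOn.div_const
    apply ContinuousOn.add
    · apply continuousOn_finset_sum
      intro j hj
      exact continuousOn_const.mul ((hXcont j hj).sub (hXcont i hiRange))
    · exact hqc.continuousOn
  -- FTC on a i * X i
  have hderivAX : ∀ t ∈ Set.uIcc (0:ℝ) τ, HasDerivAt (fun t => a i t * X i t)
      (deriv (a i) t * X i t + a i t * g t) t := by
    intro t ht
    rw [huIcc] at ht
    exact (((ha i).differentiable one_ne_zero t).hasDerivAt).mul (hgderiv t ht)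
  have hcont1 : ContinuousOn (fun t => deriv (a i) t * X i t) (Set.Icc 0 τ) :=
    haD.continuousOn.mul (hXcont i hiRange)
  have hcont2 : ContinuousOn (fun t => a i t * g t) (Set.Icc 0 τ) :=
    haC.continuousOn.mul hgcont
  have int1 : IntervalIntegrable (fun t => deriv (a i) t * X i t) MeasureTheory.volume 0 τ := by
    apply ContinuousOn.intervalIntegrable; rw [huIcc]; exact hcont1
  have int2 : IntervalIntegrable (fun t => a i t * g t) MeasureTheory.volume 0 τ := by
    apply ContinuousOn.intervalIntegrable; rw [huIcc]; exact hcont2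
  have hftc := intervalIntegral.integral_eq_sub_of_hasDerivAt hderivAX
    (by apply ContinuousOn.intervalIntegrable; rw [huIcc]; exact hcont1.add hcont2)
  have hXτ : X i τ = 0 := by simp [hX, hfin i hi]
  have hX00 : X i 0 = 0 := by simp [hX, hinit i hi]
  rw [hXτ, hX00, mul_zero, mul_zero, sub_zero] at hftc
  rw [intervalIntegral.integral_add int1 int2] at hftc
  have hIag : (∫ t in (0:ℝ)..τ, a i t * g t)
      = -(∫ t in (0:ℝ)..τ, deriv (a i) t * X i t) := by linarith
  -- pointwise identity
  have hpt : ∀ t : ℝ, a i t * (q i t - qt i t)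
      = C i * (a i t * g t)
        + ∑ j ∈ Finset.range (n+1), α i j * (a i t * (X i t - X j t)) := by
    intro t
    have h1 : C i * (a i t * g t)
        = a i t * ((∑ j ∈ Finset.range (n+1), α i j * (X j t - X i t)) + (q i t - qt i t)) := by
      rw [hgdef]
      field_simp
    have h2 : ∑ j ∈ Finset.range (n+1), α i j * (a i t * (X i t - X j t))
        = a i t * (-(∑ j ∈ Finset.range (n+1), α i j * (X j t - X i t))) := by
      rw [mul_neg, Finset.mul_sum, ← Finset.sum_neg_distrib]
      exact Finset.sum_congr rfl fun j _ => by ring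
    rw [h1, h2]; ring
  have intC : IntervalIntegrable (fun t => C i * (a i t * g t)) MeasureTheory.volume 0 τ :=
    int2.const_mul _
  have intj : ∀ j ∈ Finset.range (n+1),
      IntervalIntegrable (fun t => α i j * (a i t * (X i t - X j t)))
        MeasureTheory.volume 0 τ := by
    intro j hj
    apply ContinuousOn.intervalIntegrable
    rw [huIcc]
    exact continuousOn_const.mul (haC.continuousOn.mul ((hXcont i hiRange).sub (hXcont j hj)))
  have intS : IntervalIntegrable
      (fun t => ∑ j ∈ Finset.range (n+1), α i j * (a i t * (X i t - X j t)))
      MeasureTheory.volume 0 τ := by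
    apply ContinuousOn.intervalIntegrable
    rw [huIcc]
    apply continuousOn_finset_sum
    intro j hj
    exact continuousOn_const.mul (haC.continuousOn.mul ((hXcont i hiRange).sub (hXcont j hj)))
  calc (∫ t in (0:ℝ)..τ, a i t * (q i t - qt i t))
      = ∫ t in (0:ℝ)..τ, (C i * (a i t * g t)
          + ∑ j ∈ Finset.range (n+1), α i j * (a i t * (X i t - X j t))) :=
        intervalIntegral.integral_congr fun t _ => hpt t
    _ = C i * (∫ t in (0:ℝ)..τ, a i t * g t)
          + ∑ j ∈ Finset.range (n+1), α i j * ∫ t in (0:ℝ)..τ, a i t * (X i t - X j t) := by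
        rw [intervalIntegral.integral_add intC intS,
          intervalIntegral.integral_const_mul, intervalIntegral.integral_finset_sum intj]
        congr 1
        exact Finset.sum_congr rfl fun j _ => intervalIntegral.integral_const_mul _ _
    _ = -(C i * ∫ t in (0:ℝ)..τ, deriv (a i) t * X i t)
          + ∑ j ∈ Finset.range (n+1), α i j * ∫ t in (0:ℝ)..τ, a i t * (X i t - X j t) := by
        rw [hIag]; ring
end

section
/- For every controlled zone i = 1,…,m, the zone savings satisfy S_i = ∫_0^τ ( −C_i a_i'(t) + a_i(t) Σ_{j=0}^n α_{ij} ) x_i(t) dt − Σ_{j=1}^m α_{ij} ∫_0^τ a_i(t) x_j(t) dt. -/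
set_option maxHeartbeats 1000000 in
/-- For every controlled zone `i = 1,…,m`, the zone savings satisfy
`S_i = ∫_0^τ ( −C_i a_i' + a_i Σ_{j=0}^n α_{ij} ) x_i dt − Σ_{j=1}^m α_{ij} ∫_0^τ a_i x_j dt`. -/
theorem controlled_zone_savings_formula
    (n m : ℕ) (hm : 1 ≤ m) (hmn : m ≤ n)
    (τ : ℝ) (hτ : 0 < τ)
    (T Tt q qt w : ℕ → ℝ → ℝ)
    (C : ℕ → ℝ) (α : ℕ → ℕ → ℝ) (a : ℕ → ℝ → ℝ)
    (hC : ∀ i, 0 < C i)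
    (hα : ∀ i j, 0 ≤ α i j)
    (hsym : ∀ i j, α i j = α j i)
    (hq : ∀ i, Continuous (q i)) (hqt : ∀ i, Continuous (qt i))
    (ha : ∀ i, ContDiff ℝ 1 (a i))
    (hdyn : ∀ i ∈ Finset.Icc 1 n, ∀ t ∈ Set.Icc (0 : ℝ) τ,
      HasDerivAt (T i)
        (((∑ j ∈ Finset.range (n + 1), α i j * (T j t - T i t)) + q i t + w i t) / C i) t)
    (hdynt : ∀ i ∈ Finset.Icc 1 n, ∀ t ∈ Set.Icc (0 : ℝ) τ,
      HasDerivAt (Tt i)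
        (((∑ j ∈ Finset.range (n + 1), α i j * (Tt j t - Tt i t)) + qt i t + w i t) / C i) t)
    (hout : ∀ t, Tt 0 t = T 0 t)
    (hunc : ∀ i ∈ Finset.Icc (m + 1) n, ∀ t ∈ Set.Icc (0 : ℝ) τ, Tt i t = T i t)
    (hinit : ∀ i ∈ Finset.Icc 1 n, Tt i 0 = T i 0)
    (hfin : ∀ i ∈ Finset.Icc 1 n, Tt i τ = T i τ) :
    ∀ i ∈ Finset.Icc 1 m,
      (∫ t in (0 : ℝ)..τ, a i t * (q i t - qt i t))
        = (∫ t in (0 : ℝ)..τ,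
            (-(C i * deriv (a i) t) + a i t * ∑ j ∈ Finset.range (n + 1), α i j)
              * (T i t - Tt i t))
          - ∑ j ∈ Finset.Icc 1 m,
              α i j * ∫ t in (0 : ℝ)..τ, a i t * (T j t - Tt j t) := by
  intro i hi
  rw [Finset.mem_Icc] at hi
  have hin : i ∈ Finset.Icc 1 n := Finset.mem_Icc.mpr ⟨hi.1, hi.2.trans hmn⟩
  have hCne : (C i) ≠ 0 := (hC i).ne'
  have huIcc : Set.uIcc (0:ℝ) τ = Set.Icc (0:ℝ) τ := Set.uIcc_of_le hτ.le
  set x : ℕ → ℝ → ℝ := fun j t => T j t - Tt j t with hxdef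
  simp only [show ∀ (j:ℕ) (t:ℝ), T j t - Tt j t = x j t from fun _ _ => rfl]
  have hx0 : ∀ t, x 0 t = 0 := fun t => by simp [hxdef, hout t]
  have hxc : ∀ j ∈ Finset.Icc 1 n, ContinuousOn (x j) (Set.Icc (0:ℝ) τ) := by
    intro j hj t ht
    exact (((hdyn j hj t ht).continuousAt).sub ((hdynt j hj t ht).continuousAt)).continuousWithinAt
  set xd : ℝ → ℝ := fun t =>
    ((∑ j ∈ Finset.range (n+1), α i j * (x j t - x i t)) + (q i t - qt i t)) / C i with hxddef
  have hxd : ∀ t ∈ Set.Icc (0:ℝ) τ, HasDerivAt (x i) (xd t) t := by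
    intro t ht
    have h1 := (hdyn i hin t ht).sub (hdynt i hin t ht)
    refine h1.congr_deriv ?_
    rw [hxddef, div_sub_div_same]
    have h2 : ∀ j, α i j * (x j t - x i t)
        = α i j * (T j t - T i t) - α i j * (Tt j t - Tt i t) := by
      intro j; simp only [hxdef]; ring
    simp only [h2, Finset.sum_sub_distrib]
    ring
  have hxdc : ContinuousOn xd (Set.Icc (0:ℝ) τ) := by
    apply ContinuousOn.div_const
    apply ContinuousOn.add
    · apply continuousOn_finset_sum
      intro j hj
      rw [Finset.mem_range, Nat.lt_succ_iff] at hj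
      rcases Nat.eq_zero_or_pos j with h0 | h1
      · subst h0
        exact (continuousOn_const.mul (continuousOn_const.sub (hxc i hin))).congr
          (fun t ht => by rw [hx0 t]; rfl)
      · exact continuousOn_const.mul
          ((hxc j (Finset.mem_Icc.mpr ⟨h1, hj⟩)).sub (hxc i hin))
    · exact ((hq i).continuousOn).sub ((hqt i).continuousOn)
  clear_value x xd
  -- integration by parts
  have hibp : (∫ t in (0:ℝ)..τ, a i t * xd t)
      = - ∫ t in (0:ℝ)..τ, deriv (a i) t * x i t := by
    have hu : ∀ t ∈ Set.uIcc (0:ℝ) τ, HasDerivAt (a i) (deriv (a i) t) t :=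
      fun t _ => (((ha i).differentiable one_ne_zero) t).hasDerivAt
    have hv : ∀ t ∈ Set.uIcc (0:ℝ) τ, HasDerivAt (x i) (xd t) t := by
      rw [huIcc]; exact hxd
    have hu' : IntervalIntegrable (deriv (a i)) MeasureTheory.volume 0 τ :=
      ((ha i).continuous_deriv le_rfl).intervalIntegrable 0 τ
    have hv' : IntervalIntegrable xd MeasureTheory.volume 0 τ := by
      apply ContinuousOn.intervalIntegrable; rw [huIcc]; exact hxdc
    rw [intervalIntegral.integral_mul_deriv_eq_deriv_mul hu hv hu' hv']
    have h0' : x i 0 = 0 := by simp [hxdef, hinit i hin]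
    have hτ' : x i τ = 0 := by simp [hxdef, hfin i hin]
    rw [h0', hτ']; ring
  -- pointwise identity
  have hpt : Set.EqOn (fun t => a i t * (q i t - qt i t))
      (fun t => C i * (a i t * xd t)
          + (a i t * ∑ j ∈ Finset.range (n+1), α i j) * x i t
          - ∑ j ∈ Finset.Icc 1 m, α i j * (a i t * x j t)) (Set.uIcc (0:ℝ) τ) := by
    intro t ht
    rw [huIcc] at ht
    have hCxd : C i * xd t
        = (∑ j ∈ Finset.range (n+1), α i j * (x j t - x i t)) + (q i t - qt i t) := by
      simp only [hxddef]; field_simp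
    have hsr : ∑ j ∈ Finset.Icc 1 m, α i j * x j t
        = ∑ j ∈ Finset.range (n+1), α i j * x j t := by
      apply Finset.sum_subset
      · intro j hj
        rw [Finset.mem_Icc] at hj
        rw [Finset.mem_range, Nat.lt_succ_iff]
        exact hj.2.trans hmn
      · intro j hjr hjm
        rw [Finset.mem_range, Nat.lt_succ_iff] at hjr
        rw [Finset.mem_Icc, not_and_or, not_le, not_le] at hjm
        rcases hjm with h | h
        · obtain rfl : j = 0 := Nat.lt_one_iff.mp h
          rw [hx0 t, mul_zero]
        · have hz : x j t = 0 := by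
            have := hunc j (Finset.mem_Icc.mpr ⟨h, hjr⟩) t ht
            simp [hxdef, this]
          rw [hz, mul_zero]
    have hexp : ∑ j ∈ Finset.range (n+1), α i j * (x j t - x i t)
        = (∑ j ∈ Finset.range (n+1), α i j * x j t)
          - (∑ j ∈ Finset.range (n+1), α i j) * x i t := by
      rw [Finset.sum_mul, ← Finset.sum_sub_distrib]
      exact Finset.sum_congr rfl fun j _ => by ring
    have key : C i * xd t
        = (∑ j ∈ Finset.Icc 1 m, α i j * x j t)
          - (∑ j ∈ Finset.range (n+1), α i j) * x i t + (q i t - qt i t) := by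
      rw [hCxd, hexp, hsr]
    have hswap : ∑ j ∈ Finset.Icc 1 m, α i j * (a i t * x j t)
        = a i t * ∑ j ∈ Finset.Icc 1 m, α i j * x j t := by
      rw [Finset.mul_sum]; exact Finset.sum_congr rfl fun j _ => by ring
    simp only
    rw [hswap]
    linear_combination (-(a i t)) * key
  -- integrability
  have hac : Continuous (a i) := (ha i).continuous
  have hIg1 : IntervalIntegrable (fun t => C i * (a i t * xd t)) MeasureTheory.volume 0 τ := by
    apply ContinuousOn.intervalIntegrable
    rw [huIcc]
    exact continuousOn_const.mul (hac.continuousOn.mul hxdc)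
  have hIg2 : IntervalIntegrable
      (fun t => (a i t * ∑ j ∈ Finset.range (n+1), α i j) * x i t) MeasureTheory.volume 0 τ := by
    apply ContinuousOn.intervalIntegrable
    rw [huIcc]
    exact (hac.continuousOn.mul continuousOn_const).mul (hxc i hin)
  have hIxj : ∀ j ∈ Finset.Icc 1 m,
      IntervalIntegrable (fun t => α i j * (a i t * x j t)) MeasureTheory.volume 0 τ := by
    intro j hj
    rw [Finset.mem_Icc] at hj
    apply ContinuousOn.intervalIntegrable
    rw [huIcc]
    exact continuousOn_const.mul (hac.continuousOn.mul
      (hxc j (Finset.mem_Icc.mpr ⟨hj.1, hj.2.trans hmn⟩)))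
  have hIg3 : IntervalIntegrable
      (fun t => ∑ j ∈ Finset.Icc 1 m, α i j * (a i t * x j t)) MeasureTheory.volume 0 τ := by
    apply ContinuousOn.intervalIntegrable
    rw [huIcc]
    apply continuousOn_finset_sum
    intro j hj
    rw [Finset.mem_Icc] at hj
    exact continuousOn_const.mul (hac.continuousOn.mul
      (hxc j (Finset.mem_Icc.mpr ⟨hj.1, hj.2.trans hmn⟩)))
  have hIax : IntervalIntegrable (fun t => deriv (a i) t * x i t) MeasureTheory.volume 0 τ := by
    apply ContinuousOn.intervalIntegrable
    rw [huIcc]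
    exact (((ha i).continuous_deriv le_rfl).continuousOn).mul (hxc i hin)
  rw [intervalIntegral.integral_congr hpt]
  rw [intervalIntegral.integral_sub (hIg1.add hIg2) hIg3,
    intervalIntegral.integral_add hIg1 hIg2,
    intervalIntegral.integral_finset_sum hIxj]
  rw [intervalIntegral.integral_const_mul, hibp]
  have hR : (∫ t in (0:ℝ)..τ,
      (-(C i * deriv (a i) t) + a i t * ∑ j ∈ Finset.range (n+1), α i j) * x i t)
      = (∫ t in (0:ℝ)..τ, C i * -(deriv (a i) t * x i t))
        + ∫ t in (0:ℝ)..τ, (a i t * ∑ j ∈ Finset.range (n+1), α i j) * x i t := by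
    have hIneg : IntervalIntegrable (fun t => C i * -(deriv (a i) t * x i t))
        MeasureTheory.volume 0 τ := by
      apply ContinuousOn.intervalIntegrable
      rw [huIcc]
      exact continuousOn_const.mul
        (((((ha i).continuous_deriv le_rfl).continuousOn).mul (hxc i hin)).neg)
    rw [← intervalIntegral.integral_add hIneg hIg2]
    apply intervalIntegral.integral_congr
    intro t ht; ring
  rw [hR, intervalIntegral.integral_const_mul, intervalIntegral.integral_neg]
  have hS : ∀ j ∈ Finset.Icc 1 m,
      (∫ t in (0:ℝ)..τ, α i j * (a i t * x j t))
        = α i j * ∫ t in (0:ℝ)..τ, a i t * x j t := fun j hj =>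
    intervalIntegral.integral_const_mul _ _
  rw [Finset.sum_congr rfl hS]
end

section
/- If all thermal prices are equal to a common constant a (a_i(t) = a for all i and t) and every controlled zone has no direct thermal contact with the outdoors (α_{i0} = 0 for i = 1,…,m), then the whole-building cost savings vanish: S = 0. That is, when controlling only interior zones, all perceived savings are fictitious. -/
/-- If all thermal prices equal a common constant `a` and every
controlled zone has no direct thermal contact with the outdoors (`α_{i0} = 0` for
`i = 1,…,m`), then the whole-building cost savings vanish: `S = 0`. -/
theorem interior_zone_savings_are_fictitious
    (n m : ℕ) (hm : 1 ≤ m) (hmn : m ≤ n)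
    (τ : ℝ) (hτ : 0 < τ)
    (T Tt q qt w : ℕ → ℝ → ℝ)
    (C : ℕ → ℝ) (α : ℕ → ℕ → ℝ) (a : ℝ)
    (hC : ∀ i, 0 < C i)
    (hα : ∀ i j, 0 ≤ α i j)
    (hsym : ∀ i j, α i j = α j i)
    (hq : ∀ i, Continuous (q i)) (hqt : ∀ i, Continuous (qt i))
    (hdyn : ∀ i ∈ Finset.Icc 1 n, ∀ t ∈ Set.Icc (0 : ℝ) τ,
      HasDerivAt (T i)
        (((∑ j ∈ Finset.range (n + 1), α i j * (T j t - T i t)) + q i t + w i t) / C i) t)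
    (hdynt : ∀ i ∈ Finset.Icc 1 n, ∀ t ∈ Set.Icc (0 : ℝ) τ,
      HasDerivAt (Tt i)
        (((∑ j ∈ Finset.range (n + 1), α i j * (Tt j t - Tt i t)) + qt i t + w i t) / C i) t)
    (hout : ∀ t, Tt 0 t = T 0 t)
    (hunc : ∀ i ∈ Finset.Icc (m + 1) n, ∀ t ∈ Set.Icc (0 : ℝ) τ, Tt i t = T i t)
    (hinit : ∀ i ∈ Finset.Icc 1 n, Tt i 0 = T i 0)
    (hfin : ∀ i ∈ Finset.Icc 1 n, Tt i τ = T i τ)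
    (hinterior : ∀ i ∈ Finset.Icc 1 m, α i 0 = 0) :
    (∑ i ∈ Finset.Icc 1 n, ∫ t in (0 : ℝ)..τ, a * (q i t - qt i t)) = 0 := by
  set x : ℕ → ℝ → ℝ := fun i t => T i t - Tt i t with hxdef
  have hx0 : ∀ t, x 0 t = 0 := fun t => by simp [hxdef, hout t]
  have hxunc : ∀ i ∈ Finset.Icc (m+1) n, ∀ t ∈ Set.Icc (0:ℝ) τ, x i t = 0 := by
    intro i hi t ht; simp [hxdef, hunc i hi t ht]
  have hset : Finset.range (n+1) = insert 0 (Finset.Icc 1 n) := by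
    ext k; simp only [Finset.mem_range, Finset.mem_insert, Finset.mem_Icc]; omega
  -- key: derivative of F at t equals ∑ (q i t - qt i t)
  have key : ∀ t ∈ Set.Icc (0:ℝ) τ,
      HasDerivAt (fun s => ∑ i ∈ Finset.Icc 1 n, C i * x i s)
        (∑ i ∈ Finset.Icc 1 n, (q i t - qt i t)) t := by
    intro t ht
    have h1 : HasDerivAt (fun s => ∑ i ∈ Finset.Icc 1 n, C i * x i s)
        (∑ i ∈ Finset.Icc 1 n,
          ((∑ j ∈ Finset.range (n+1), α i j * (x j t - x i t)) + (q i t - qt i t))) t := by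
      apply HasDerivAt.fun_sum
      intro i hi
      have hd := ((hdyn i hi t ht).sub (hdynt i hi t ht)).const_mul (C i)
      have heq : C i * (((∑ j ∈ Finset.range (n + 1), α i j * (T j t - T i t)) + q i t + w i t) / C i
          - ((∑ j ∈ Finset.range (n + 1), α i j * (Tt j t - Tt i t)) + qt i t + w i t) / C i)
          = (∑ j ∈ Finset.range (n+1), α i j * (x j t - x i t)) + (q i t - qt i t) := by
        have hs : (∑ j ∈ Finset.range (n+1), α i j * (x j t - x i t))
            = (∑ j ∈ Finset.range (n+1), α i j * (T j t - T i t))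
              - (∑ j ∈ Finset.range (n+1), α i j * (Tt j t - Tt i t)) := by
          rw [← Finset.sum_sub_distrib]
          refine Finset.sum_congr rfl fun j _ => ?_
          show α i j * ((T j t - Tt j t) - (T i t - Tt i t))
              = α i j * (T j t - T i t) - α i j * (Tt j t - Tt i t)
          ring
        rw [hs, div_sub_div_same, mul_comm, div_mul_cancel₀ _ (hC i).ne']
        ring
      rw [← heq]
      exact hd
    have h2 : (∑ i ∈ Finset.Icc 1 n, ∑ j ∈ Finset.range (n+1), α i j * (x j t - x i t)) = 0 := by
      have hsplit : ∀ i ∈ Finset.Icc 1 n,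
          (∑ j ∈ Finset.range (n+1), α i j * (x j t - x i t))
            = α i 0 * (x 0 t - x i t) + ∑ j ∈ Finset.Icc 1 n, α i j * (x j t - x i t) := by
        intro i _
        rw [hset, Finset.sum_insert (by simp)]
      rw [Finset.sum_congr rfl hsplit, Finset.sum_add_distrib]
      have hterm0 : ∀ i ∈ Finset.Icc 1 n, α i 0 * (x 0 t - x i t) = 0 := by
        intro i hi
        rcases le_or_gt i m with h | h
        · have : α i 0 = 0 := hinterior i (Finset.mem_Icc.mpr ⟨(Finset.mem_Icc.mp hi).1, h⟩)
          simp [this]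
        · have : x i t = 0 := hxunc i (Finset.mem_Icc.mpr ⟨h, (Finset.mem_Icc.mp hi).2⟩) t ht
          simp [hx0, this]
      rw [Finset.sum_eq_zero hterm0, zero_add]
      set S := ∑ i ∈ Finset.Icc 1 n, ∑ j ∈ Finset.Icc 1 n, α i j * (x j t - x i t) with hS
      have hneg : S = -S := by
        nth_rewrite 1 [hS, Finset.sum_comm]
        rw [hS, ← Finset.sum_neg_distrib]
        refine Finset.sum_congr rfl fun i _ => ?_
        rw [← Finset.sum_neg_distrib]
        refine Finset.sum_congr rfl fun j _ => ?_
        rw [hsym j i]; ring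
      linarith
    have : (∑ i ∈ Finset.Icc 1 n,
          ((∑ j ∈ Finset.range (n+1), α i j * (x j t - x i t)) + (q i t - qt i t)))
        = ∑ i ∈ Finset.Icc 1 n, (q i t - qt i t) := by
      rw [Finset.sum_add_distrib, h2, zero_add]
    rwa [this] at h1
  have hfcont : Continuous (fun t => ∑ i ∈ Finset.Icc 1 n, (q i t - qt i t)) :=
    continuous_finset_sum _ fun i _ => (hq i).sub (hqt i)
  have hint : (∫ t in (0:ℝ)..τ, ∑ i ∈ Finset.Icc 1 n, (q i t - qt i t)) = 0 := by
    have hFTC := intervalIntegral.integral_eq_sub_of_hasDerivAt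
      (f := fun s => ∑ i ∈ Finset.Icc 1 n, C i * x i s)
      (fun t ht => key t (by rwa [Set.uIcc_of_le hτ.le] at ht))
      (hfcont.intervalIntegrable 0 τ)
    rw [hFTC]
    have hτ0 : ∀ i ∈ Finset.Icc 1 n, x i τ = 0 := fun i hi => by simp [hxdef, hfin i hi]
    have h00 : ∀ i ∈ Finset.Icc 1 n, x i 0 = 0 := fun i hi => by simp [hxdef, hinit i hi]
    have h1 : (∑ i ∈ Finset.Icc 1 n, C i * x i τ) = 0 :=
      Finset.sum_eq_zero fun i hi => by rw [hτ0 i hi, mul_zero]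
    have h2 : (∑ i ∈ Finset.Icc 1 n, C i * x i 0) = 0 :=
      Finset.sum_eq_zero fun i hi => by rw [h00 i hi, mul_zero]
    show (∑ i ∈ Finset.Icc 1 n, C i * x i τ) - (∑ i ∈ Finset.Icc 1 n, C i * x i 0) = 0
    rw [h1, h2, sub_zero]
  have hstep : ∀ i ∈ Finset.Icc 1 n,
      (∫ t in (0:ℝ)..τ, a * (q i t - qt i t)) = a * ∫ t in (0:ℝ)..τ, (q i t - qt i t) := by
    intro i _
    exact intervalIntegral.integral_const_mul a _
  rw [Finset.sum_congr rfl hstep, ← Finset.mul_sum,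
      ← intervalIntegral.integral_finset_sum (μ := MeasureTheory.volume)
        (f := fun i t => q i t - qt i t)
        (fun i _ => ((hq i).sub (hqt i)).intervalIntegrable 0 τ),
      hint, mul_zero]
end

section
/- In a two-zone building (n = 2) where only zone 1 is controlled (m = 1) and the thermal prices are spatially uniform (a_1(t) = a_2(t) = a(t) for all t), the savings overestimation error equals S_1 − S = α_{12} ∫_0^τ a(t) x_1(t) dt. -/
/-!
Zone 2 is uncontrolled, so its temperature is the same in both runs and so is the left-hand
side `C₂ dT₂/dt` of its heat balance. The right-hand sides then agree as well, which forces the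
change of its power to cancel the change of the coupling with zone 1:
`q₂ − q̃₂ = −α₁₂ (T₁ − T̃₁)` at every interior time. Weighting by the uniform price and
integrating gives `S₂ = −α₁₂ ∫ a x₁`, and `S₁ − S = −S₂`.
-/

open Set Filter

theorem HasDerivAt.unique_of_eqOn {𝕜 F : Type*} [NontriviallyNormedField 𝕜]
    [NormedAddCommGroup F] [NormedSpace 𝕜 F] {f g : 𝕜 → F} {f' g' : F} {x : 𝕜} {s : Set 𝕜}
    (hf : HasDerivAt f f' x) (hg : HasDerivAt g g' x) (hfg : EqOn f g s) (hs : s ∈ nhds x) :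
    f' = g' :=
  (hf.congr_of_eventuallyEq (eventuallyEq_of_mem hs hfg.symm)).unique hg

theorem power_diff_eq_of_heat_balance_eq {C α₀ α T₀ T Tn Tn' q q' w : ℝ} (hC : C ≠ 0)
    (h : (α₀ * (T₀ - T) + α * (Tn - T) + q + w) / C = (α₀ * (T₀ - T) + α * (Tn' - T) + q' + w) / C) :
    q - q' = -(α * (Tn - Tn')) := by
  have := (div_left_inj' hC).1 h
  linarith

theorem two_zone_overestimation_error_general
    (τ : ℝ) (hτ : 0 < τ)
    (T0 T1 T2 Tt1 Tt2 q2 qt2 w2 : ℝ → ℝ)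
    (C2 α12 α20 : ℝ)
    (hC2 : 0 < C2)
    (a : ℝ → ℝ)
    (hdyn2 : ∀ t ∈ Set.Icc (0 : ℝ) τ,
      HasDerivAt T2 ((α20 * (T0 t - T2 t) + α12 * (T1 t - T2 t) + q2 t + w2 t) / C2) t)
    (hdynt2 : ∀ t ∈ Set.Icc (0 : ℝ) τ,
      HasDerivAt Tt2 ((α20 * (T0 t - Tt2 t) + α12 * (Tt1 t - Tt2 t) + qt2 t + w2 t) / C2) t)
    (hunc : ∀ t ∈ Set.Icc (0 : ℝ) τ, Tt2 t = T2 t)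
    (S1 S2 : ℝ)
    (hS2 : S2 = ∫ t in (0 : ℝ)..τ, a t * (q2 t - qt2 t)) :
    S1 - (S1 + S2) = α12 * ∫ t in (0 : ℝ)..τ, a t * (T1 t - Tt1 t) := by
  have power_gap : EqOn (fun t ↦ a t * (q2 t - qt2 t))
      (fun t ↦ -(α12 * (a t * (T1 t - Tt1 t)))) (Ioo 0 τ) := by
    intro t ht
    have htIcc := Ioo_subset_Icc_self ht
    have balance := (hdyn2 t htIcc).unique_of_eqOn (hdynt2 t htIcc)
      (fun s hs ↦ (hunc s hs).symm) (Icc_mem_nhds ht.1 ht.2)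
    rw [hunc t htIcc] at balance
    simp only [power_diff_eq_of_heat_balance_eq hC2.ne' balance]
    ring
  rw [hS2, intervalIntegral.integral_congr_Ioo_of_le hτ.le power_gap,
    intervalIntegral.integral_neg, intervalIntegral.integral_const_mul]
  ring

/-- In a two-zone building where only zone 1 is controlled and the
thermal prices are spatially uniform, the savings overestimation error equals
`S_1 − S = α_{12} ∫_0^τ a(t) x_1(t) dt`. -/
theorem two_zone_overestimation_error
    (τ : ℝ) (hτ : 0 < τ)
    (T0 T1 T2 Tt1 Tt2 q1 q2 qt1 qt2 w1 w2 : ℝ → ℝ)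
    (C1 C2 α10 α12 α20 : ℝ)
    (hC1 : 0 < C1) (hC2 : 0 < C2)
    (h10 : 0 ≤ α10) (h12 : 0 ≤ α12) (h20 : 0 ≤ α20)
    (a : ℝ → ℝ) (ha : ContDiff ℝ 1 a)
    (hq1 : Continuous q1) (hq2 : Continuous q2)
    (hqt1 : Continuous qt1) (hqt2 : Continuous qt2)
    (hdyn1 : ∀ t ∈ Set.Icc (0 : ℝ) τ,
      HasDerivAt T1 ((α10 * (T0 t - T1 t) + α12 * (T2 t - T1 t) + q1 t + w1 t) / C1) t)
    (hdyn2 : ∀ t ∈ Set.Icc (0 : ℝ) τ,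
      HasDerivAt T2 ((α20 * (T0 t - T2 t) + α12 * (T1 t - T2 t) + q2 t + w2 t) / C2) t)
    (hdynt1 : ∀ t ∈ Set.Icc (0 : ℝ) τ,
      HasDerivAt Tt1 ((α10 * (T0 t - Tt1 t) + α12 * (Tt2 t - Tt1 t) + qt1 t + w1 t) / C1) t)
    (hdynt2 : ∀ t ∈ Set.Icc (0 : ℝ) τ,
      HasDerivAt Tt2 ((α20 * (T0 t - Tt2 t) + α12 * (Tt1 t - Tt2 t) + qt2 t + w2 t) / C2) t)
    (hunc : ∀ t ∈ Set.Icc (0 : ℝ) τ, Tt2 t = T2 t)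
    (hinit1 : Tt1 0 = T1 0) (hfin1 : Tt1 τ = T1 τ)
    (hinit2 : Tt2 0 = T2 0) (hfin2 : Tt2 τ = T2 τ)
    (S1 S2 : ℝ)
    (hS1 : S1 = ∫ t in (0 : ℝ)..τ, a t * (q1 t - qt1 t))
    (hS2 : S2 = ∫ t in (0 : ℝ)..τ, a t * (q2 t - qt2 t)) :
    S1 - (S1 + S2) = α12 * ∫ t in (0 : ℝ)..τ, a t * (T1 t - Tt1 t) :=
  two_zone_overestimation_error_general τ hτ T0 T1 T2 Tt1 Tt2 q2 qt2 w2 C2 α12 α20 hC2 a hdyn2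
    hdynt2 hunc S1 S2 hS2
end

section
/- In a two-zone building (n = 2) where only zone 1 is controlled (m = 1) and the thermal prices are spatially uniform (a_1(t) = a_2(t) = a(t) for all t), the true whole-building savings equal S = ∫_0^τ ( a(t) α_{10} − C_1 a'(t) ) x_1(t) dt, where a' is the time derivative of a. -/
/-- In a two-zone building where only zone 1 is controlled and the
thermal prices are spatially uniform, the true whole-building savings equal
`S = ∫_0^τ ( a(t) α_{10} − C_1 a'(t) ) x_1(t) dt`. -/
theorem two_zone_true_savings
    (τ : ℝ) (hτ : 0 < τ)
    (T0 T1 T2 Tt1 Tt2 q1 q2 qt1 qt2 w1 w2 : ℝ → ℝ)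
    (C1 C2 α10 α12 α20 : ℝ)
    (hC1 : 0 < C1) (hC2 : 0 < C2)
    (h10 : 0 ≤ α10) (h12 : 0 ≤ α12) (h20 : 0 ≤ α20)
    (a : ℝ → ℝ) (ha : ContDiff ℝ 1 a)
    (hq1 : Continuous q1) (hq2 : Continuous q2)
    (hqt1 : Continuous qt1) (hqt2 : Continuous qt2)
    (hdyn1 : ∀ t ∈ Set.Icc (0 : ℝ) τ,
      HasDerivAt T1 ((α10 * (T0 t - T1 t) + α12 * (T2 t - T1 t) + q1 t + w1 t) / C1) t)
    (hdyn2 : ∀ t ∈ Set.Icc (0 : ℝ) τ,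
      HasDerivAt T2 ((α20 * (T0 t - T2 t) + α12 * (T1 t - T2 t) + q2 t + w2 t) / C2) t)
    (hdynt1 : ∀ t ∈ Set.Icc (0 : ℝ) τ,
      HasDerivAt Tt1 ((α10 * (T0 t - Tt1 t) + α12 * (Tt2 t - Tt1 t) + qt1 t + w1 t) / C1) t)
    (hdynt2 : ∀ t ∈ Set.Icc (0 : ℝ) τ,
      HasDerivAt Tt2 ((α20 * (T0 t - Tt2 t) + α12 * (Tt1 t - Tt2 t) + qt2 t + w2 t) / C2) t)
    (hunc : ∀ t ∈ Set.Icc (0 : ℝ) τ, Tt2 t = T2 t)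
    (hinit1 : Tt1 0 = T1 0) (hfin1 : Tt1 τ = T1 τ)
    (hinit2 : Tt2 0 = T2 0) (hfin2 : Tt2 τ = T2 τ)
    (S1 S2 : ℝ)
    (hS1 : S1 = ∫ t in (0 : ℝ)..τ, a t * (q1 t - qt1 t))
    (hS2 : S2 = ∫ t in (0 : ℝ)..τ, a t * (q2 t - qt2 t)) :
    S1 + S2 = ∫ t in (0 : ℝ)..τ, (a t * α10 - C1 * deriv a t) * (T1 t - Tt1 t) := by
  have hle : (0:ℝ) ≤ τ := hτ.le
  have hIcc : Set.uIcc (0:ℝ) τ = Set.Icc 0 τ := Set.uIcc_of_le hle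
  set x1 : ℝ → ℝ := fun t => T1 t - Tt1 t with hx1def
  set D : ℝ → ℝ := fun t => ((α10 + α12) * (Tt1 t - T1 t) + (q1 t - qt1 t)) / C1 with hDdef
  -- continuity of temperatures on Icc
  have hcT1 : ContinuousOn T1 (Set.Icc 0 τ) :=
    fun t ht => ((hdyn1 t ht).continuousAt).continuousWithinAt
  have hcTt1 : ContinuousOn Tt1 (Set.Icc 0 τ) :=
    fun t ht => ((hdynt1 t ht).continuousAt).continuousWithinAt
  have hcx1 : ContinuousOn x1 (Set.Icc 0 τ) := hcT1.sub hcTt1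
  have hca : Continuous a := ha.continuous
  have hca' : Continuous (deriv a) := ha.continuous_deriv le_rfl
  -- zone 2 identity
  have hzone2 : ∀ t ∈ Set.Icc (0:ℝ) τ, q2 t - qt2 t = -(α12 * x1 t) := by
    intro t ht
    have hd : HasDerivAt (fun s => Tt2 s - T2 s)
        (((α20 * (T0 t - Tt2 t) + α12 * (Tt1 t - Tt2 t) + qt2 t + w2 t) / C2)
          - ((α20 * (T0 t - T2 t) + α12 * (T1 t - T2 t) + q2 t + w2 t) / C2)) t :=
      (hdynt2 t ht).sub (hdyn2 t ht)
    have hzero : HasDerivWithinAt (fun _ : ℝ => (0:ℝ))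
        (((α20 * (T0 t - Tt2 t) + α12 * (Tt1 t - Tt2 t) + qt2 t + w2 t) / C2)
          - ((α20 * (T0 t - T2 t) + α12 * (T1 t - T2 t) + q2 t + w2 t) / C2))
        (Set.Icc 0 τ) t := by
      refine (hd.hasDerivWithinAt).congr ?_ ?_
      · intro s hs; simp [hunc s hs]
      · simp [hunc t ht]
    have huniq : UniqueDiffWithinAt ℝ (Set.Icc (0:ℝ) τ) t := (uniqueDiffOn_Icc hτ) t ht
    have heq0 : ((α20 * (T0 t - Tt2 t) + α12 * (Tt1 t - Tt2 t) + qt2 t + w2 t) / C2)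
          - ((α20 * (T0 t - T2 t) + α12 * (T1 t - T2 t) + q2 t + w2 t) / C2) = 0 :=
      huniq.eq_deriv _ hzero (hasDerivWithinAt_const t _ 0)
    have h2 := hunc t ht
    have hC2' : C2 ≠ 0 := hC2.ne'
    rw [h2] at heq0
    field_simp at heq0
    simp only [hx1def]
    linarith
  -- zone 1 derivative
  have hx1deriv : ∀ t ∈ Set.Icc (0:ℝ) τ, HasDerivAt x1 (D t) t := by
    intro t ht
    have h := (hdyn1 t ht).sub (hdynt1 t ht)
    have hval : ((α10 * (T0 t - T1 t) + α12 * (T2 t - T1 t) + q1 t + w1 t) / C1)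
        - ((α10 * (T0 t - Tt1 t) + α12 * (Tt2 t - Tt1 t) + qt1 t + w1 t) / C1) = D t := by
      rw [hDdef]; rw [hunc t ht]; ring
    rw [← hval]
    exact h
  -- continuity of D on Icc
  have hcD : ContinuousOn D (Set.Icc 0 τ) := by
    apply ContinuousOn.div_const
    exact (continuousOn_const.mul (hcTt1.sub hcT1)).add
      ((hq1.continuousOn).sub (hqt1.continuousOn))
  -- integrability
  have hiD : IntervalIntegrable D MeasureTheory.volume 0 τ := by
    apply ContinuousOn.intervalIntegrable; rwa [hIcc]
  have hia' : IntervalIntegrable (deriv a) MeasureTheory.volume 0 τ :=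
    hca'.intervalIntegrable 0 τ
  have hiaD : IntervalIntegrable (fun t => a t * D t) MeasureTheory.volume 0 τ := by
    apply ContinuousOn.intervalIntegrable; rw [hIcc]
    exact hca.continuousOn.mul hcD
  have hiax1 : IntervalIntegrable (fun t => a t * x1 t) MeasureTheory.volume 0 τ := by
    apply ContinuousOn.intervalIntegrable; rw [hIcc]
    exact hca.continuousOn.mul hcx1
  have hia'x1 : IntervalIntegrable (fun t => deriv a t * x1 t) MeasureTheory.volume 0 τ := by
    apply ContinuousOn.intervalIntegrable; rw [hIcc]
    exact hca'.continuousOn.mul hcx1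
  -- integration by parts
  have hIBP : ∫ t in (0:ℝ)..τ, a t * D t
      = a τ * x1 τ - a 0 * x1 0 - ∫ t in (0:ℝ)..τ, deriv a t * x1 t := by
    apply intervalIntegral.integral_mul_deriv_eq_deriv_mul
    · intro t ht
      exact ((ha.differentiable one_ne_zero) t).hasDerivAt
    · intro t ht; rw [hIcc] at ht; exact hx1deriv t ht
    · exact hia'
    · exact hiD
  have hx10 : x1 0 = 0 := by simp [hx1def, hinit1]
  have hx1τ : x1 τ = 0 := by simp [hx1def, hfin1]
  rw [hx10, hx1τ] at hIBP
  simp only [mul_zero, zero_sub, sub_zero, zero_add] at hIBP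
  -- LHS computation
  have hsum : S1 + S2 = ∫ t in (0:ℝ)..τ,
      (C1 * (a t * D t) + α10 * (a t * x1 t)) := by
    rw [hS1, hS2, ← intervalIntegral.integral_add (f := fun t => a t * (q1 t - qt1 t))
      (g := fun t => a t * (q2 t - qt2 t))
      ((hca.mul (hq1.sub hqt1)).intervalIntegrable 0 τ)
      ((hca.mul (hq2.sub hqt2)).intervalIntegrable 0 τ)]
    apply intervalIntegral.integral_congr
    intro t ht
    rw [hIcc] at ht
    have h2 := hzone2 t ht
    have hq1eq : q1 t - qt1 t = C1 * D t + (α10 + α12) * x1 t := by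
      simp only [hDdef, hx1def]
      field_simp
      ring
    simp only [hx1def] at h2 hq1eq ⊢
    rw [h2, hq1eq]
    ring
  rw [hsum]
  rw [intervalIntegral.integral_add
      (hiaD.const_mul C1) (hiax1.const_mul α10),
    intervalIntegral.integral_const_mul, intervalIntegral.integral_const_mul, hIBP]
  have hRHS : ∫ t in (0:ℝ)..τ, (a t * α10 - C1 * deriv a t) * x1 t
      = α10 * (∫ t in (0:ℝ)..τ, a t * x1 t) - C1 * ∫ t in (0:ℝ)..τ, deriv a t * x1 t := by
    rw [← intervalIntegral.integral_const_mul, ← intervalIntegral.integral_const_mul,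
      ← intervalIntegral.integral_sub
        (hiax1.const_mul α10) (hia'x1.const_mul C1)]
    apply intervalIntegral.integral_congr
    intro t _; ring
  simp only [hx1def] at hRHS
  rw [hRHS]
  ring
end

section
/- In a two-zone building (n = 2) where only zone 1 is controlled (m = 1), the thermal price is spatially uniform and constant in time (a_1(t) = a_2(t) = a > 0 for all t), α_{10} > 0, and ∫_0^τ x_1(t) dt ≠ 0, the relative overestimation error equals (S_1 − S)/S = α_{12}/α_{10}; in particular it is independent of the temperature trajectories and the price level. -/
/-- In a two-zone building where only zone 1 is controlled and the
thermal price is spatially uniform and constant in time, with `α_{10} > 0` and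
`∫_0^τ x_1 ≠ 0`, the relative overestimation error equals
`(S_1 − S)/S = α_{12}/α_{10}`, independent of temperatures and the price level. -/
theorem two_zone_relative_overestimation_error
    (τ : ℝ) (hτ : 0 < τ)
    (T0 T1 T2 Tt1 Tt2 q1 q2 qt1 qt2 w1 w2 : ℝ → ℝ)
    (C1 C2 α10 α12 α20 : ℝ)
    (hC1 : 0 < C1) (hC2 : 0 < C2)
    (h10 : 0 < α10) (h12 : 0 ≤ α12) (h20 : 0 ≤ α20)
    (a : ℝ) (ha : 0 < a)
    (hq1 : Continuous q1) (hq2 : Continuous q2)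
    (hqt1 : Continuous qt1) (hqt2 : Continuous qt2)
    (hdyn1 : ∀ t ∈ Set.Icc (0 : ℝ) τ,
      HasDerivAt T1 ((α10 * (T0 t - T1 t) + α12 * (T2 t - T1 t) + q1 t + w1 t) / C1) t)
    (hdyn2 : ∀ t ∈ Set.Icc (0 : ℝ) τ,
      HasDerivAt T2 ((α20 * (T0 t - T2 t) + α12 * (T1 t - T2 t) + q2 t + w2 t) / C2) t)
    (hdynt1 : ∀ t ∈ Set.Icc (0 : ℝ) τ,
      HasDerivAt Tt1 ((α10 * (T0 t - Tt1 t) + α12 * (Tt2 t - Tt1 t) + qt1 t + w1 t) / C1) t)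
    (hdynt2 : ∀ t ∈ Set.Icc (0 : ℝ) τ,
      HasDerivAt Tt2 ((α20 * (T0 t - Tt2 t) + α12 * (Tt1 t - Tt2 t) + qt2 t + w2 t) / C2) t)
    (hunc : ∀ t ∈ Set.Icc (0 : ℝ) τ, Tt2 t = T2 t)
    (hinit1 : Tt1 0 = T1 0) (hfin1 : Tt1 τ = T1 τ)
    (hinit2 : Tt2 0 = T2 0) (hfin2 : Tt2 τ = T2 τ)
    (hx1 : (∫ t in (0 : ℝ)..τ, (T1 t - Tt1 t)) ≠ 0)
    (S1 S2 : ℝ)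
    (hS1 : S1 = a * ∫ t in (0 : ℝ)..τ, (q1 t - qt1 t))
    (hS2 : S2 = a * ∫ t in (0 : ℝ)..τ, (q2 t - qt2 t)) :
    (S1 - (S1 + S2)) / (S1 + S2) = α12 / α10 := by
  have huIcc : Set.uIcc (0:ℝ) τ = Set.Icc 0 τ := Set.uIcc_of_le hτ.le
  have hC1' : C1 ≠ 0 := hC1.ne'
  have hC2' : C2 ≠ 0 := hC2.ne'
  -- continuity of temperatures on Icc
  have cT1 : ContinuousOn T1 (Set.Icc 0 τ) :=
    fun t ht => (hdyn1 t ht).continuousAt.continuousWithinAt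
  have cT2 : ContinuousOn T2 (Set.Icc 0 τ) :=
    fun t ht => (hdyn2 t ht).continuousAt.continuousWithinAt
  have cTt1 : ContinuousOn Tt1 (Set.Icc 0 τ) :=
    fun t ht => (hdynt1 t ht).continuousAt.continuousWithinAt
  have cTt2 : ContinuousOn Tt2 (Set.Icc 0 τ) :=
    fun t ht => (hdynt2 t ht).continuousAt.continuousWithinAt
  set X : ℝ := ∫ t in (0:ℝ)..τ, (T1 t - Tt1 t) with hX
  have hIx : IntervalIntegrable (fun t => T1 t - Tt1 t) MeasureTheory.volume 0 τ := by
    apply ContinuousOn.intervalIntegrable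
    rw [huIcc]; exact cT1.sub cTt1
  have hIy : IntervalIntegrable (fun t => T2 t - Tt2 t) MeasureTheory.volume 0 τ := by
    apply ContinuousOn.intervalIntegrable
    rw [huIcc]; exact cT2.sub cTt2
  have hIq1 : IntervalIntegrable (fun t => q1 t - qt1 t) MeasureTheory.volume 0 τ :=
    (hq1.sub hqt1).intervalIntegrable 0 τ
  have hIq2 : IntervalIntegrable (fun t => q2 t - qt2 t) MeasureTheory.volume 0 τ :=
    (hq2.sub hqt2).intervalIntegrable 0 τ
  have hY : (∫ t in (0:ℝ)..τ, (T2 t - Tt2 t)) = 0 := by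
    rw [intervalIntegral.integral_congr (g := fun _ => (0:ℝ))
      (fun t ht => by rw [huIcc] at ht; simp [hunc t ht]), intervalIntegral.integral_zero]
  -- zone 1
  have key1 : (∫ t in (0:ℝ)..τ,
      (q1 t - qt1 t - (α10 + α12) * (T1 t - Tt1 t) + α12 * (T2 t - Tt2 t)))
      = C1 * (T1 τ - Tt1 τ) - C1 * (T1 0 - Tt1 0) := by
    apply intervalIntegral.integral_eq_sub_of_hasDerivAt
    · intro t ht
      rw [huIcc] at ht
      have h := (((hdyn1 t ht).sub (hdynt1 t ht)).const_mul C1)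
      refine h.congr_deriv ?_
      field_simp
      ring
    · apply (((hIq1.sub (hIx.const_mul _)).add (hIy.const_mul _)))
  have key2 : (∫ t in (0:ℝ)..τ,
      (q2 t - qt2 t - (α20 + α12) * (T2 t - Tt2 t) + α12 * (T1 t - Tt1 t)))
      = C2 * (T2 τ - Tt2 τ) - C2 * (T2 0 - Tt2 0) := by
    apply intervalIntegral.integral_eq_sub_of_hasDerivAt
    · intro t ht
      rw [huIcc] at ht
      have h := (((hdyn2 t ht).sub (hdynt2 t ht)).const_mul C2)
      refine h.congr_deriv ?_
      field_simp
      ring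
    · apply (((hIq2.sub (hIy.const_mul _)).add (hIx.const_mul _)))
  rw [intervalIntegral.integral_add (hIq1.sub (hIx.const_mul _)) (hIy.const_mul _),
    intervalIntegral.integral_sub hIq1 (hIx.const_mul _),
    intervalIntegral.integral_const_mul, intervalIntegral.integral_const_mul, hY] at key1
  rw [intervalIntegral.integral_add (hIq2.sub (hIy.const_mul _)) (hIx.const_mul _),
    intervalIntegral.integral_sub hIq2 (hIy.const_mul _),
    intervalIntegral.integral_const_mul, intervalIntegral.integral_const_mul, hY] at key2
  simp only [hfin1, hinit1, hfin2, hinit2, sub_self, mul_zero, sub_zero, zero_sub, zero_add] at key1 key2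
  have e1 : (∫ t in (0:ℝ)..τ, (q1 t - qt1 t)) = (α10 + α12) * X := by linarith
  have e2 : (∫ t in (0:ℝ)..τ, (q2 t - qt2 t)) = -(α12 * X) := by linarith
  rw [hS1, hS2, e1, e2]
  have hden : a * ((α10 + α12) * X) + a * -(α12 * X) = a * α10 * X := by ring
  rw [hden, div_eq_div_iff (mul_ne_zero (mul_ne_zero ha.ne' h10.ne') hx1) h10.ne']
  ring
end

section
/- In a two-zone building (n = 2) where only zone 1 is controlled (m = 1) and the thermal price is spatially uniform and constant in time (a_1(t) = a_2(t) = a for all t), the true whole-building savings are S = a α_{10} ∫_0^τ x_1(t) dt and the perceived zone-1 savings are S_1 = a (α_{10} + α_{12}) ∫_0^τ x_1(t) dt. -/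
/-- In a two-zone building where only zone 1 is controlled and the
thermal price is spatially uniform and constant in time, the true whole-building
savings are `S = a α_{10} ∫_0^τ x_1` and the perceived zone-1 savings are
`S_1 = a (α_{10} + α_{12}) ∫_0^τ x_1`. -/
theorem two_zone_constant_price_savings
    (τ : ℝ) (hτ : 0 < τ)
    (T0 T1 T2 Tt1 Tt2 q1 q2 qt1 qt2 w1 w2 : ℝ → ℝ)
    (C1 C2 α10 α12 α20 : ℝ)
    (hC1 : 0 < C1) (hC2 : 0 < C2)
    (h10 : 0 ≤ α10) (h12 : 0 ≤ α12) (h20 : 0 ≤ α20)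
    (a : ℝ)
    (hq1 : Continuous q1) (hq2 : Continuous q2)
    (hqt1 : Continuous qt1) (hqt2 : Continuous qt2)
    (hdyn1 : ∀ t ∈ Set.Icc (0 : ℝ) τ,
      HasDerivAt T1 ((α10 * (T0 t - T1 t) + α12 * (T2 t - T1 t) + q1 t + w1 t) / C1) t)
    (hdyn2 : ∀ t ∈ Set.Icc (0 : ℝ) τ,
      HasDerivAt T2 ((α20 * (T0 t - T2 t) + α12 * (T1 t - T2 t) + q2 t + w2 t) / C2) t)
    (hdynt1 : ∀ t ∈ Set.Icc (0 : ℝ) τ,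
      HasDerivAt Tt1 ((α10 * (T0 t - Tt1 t) + α12 * (Tt2 t - Tt1 t) + qt1 t + w1 t) / C1) t)
    (hdynt2 : ∀ t ∈ Set.Icc (0 : ℝ) τ,
      HasDerivAt Tt2 ((α20 * (T0 t - Tt2 t) + α12 * (Tt1 t - Tt2 t) + qt2 t + w2 t) / C2) t)
    (hunc : ∀ t ∈ Set.Icc (0 : ℝ) τ, Tt2 t = T2 t)
    (hinit1 : Tt1 0 = T1 0) (hfin1 : Tt1 τ = T1 τ)
    (hinit2 : Tt2 0 = T2 0) (hfin2 : Tt2 τ = T2 τ)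
    (S1 S2 : ℝ)
    (hS1 : S1 = a * ∫ t in (0 : ℝ)..τ, (q1 t - qt1 t))
    (hS2 : S2 = a * ∫ t in (0 : ℝ)..τ, (q2 t - qt2 t)) :
    S1 + S2 = a * α10 * (∫ t in (0 : ℝ)..τ, (T1 t - Tt1 t))
      ∧ S1 = a * (α10 + α12) * (∫ t in (0 : ℝ)..τ, (T1 t - Tt1 t)) := by
  have hle : (0:ℝ) ≤ τ := hτ.le
  have huIcc : Set.uIcc (0:ℝ) τ = Set.Icc 0 τ := Set.uIcc_of_le hle
  have hT1c : ContinuousOn T1 (Set.Icc 0 τ) :=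
    fun t ht => ((hdyn1 t ht).continuousAt).continuousWithinAt
  have hTt1c : ContinuousOn Tt1 (Set.Icc 0 τ) :=
    fun t ht => ((hdynt1 t ht).continuousAt).continuousWithinAt
  have hx1c : ContinuousOn (fun t => T1 t - Tt1 t) (Set.Icc 0 τ) := hT1c.sub hTt1c
  have hint_x1 : IntervalIntegrable (fun t => T1 t - Tt1 t) MeasureTheory.volume 0 τ := by
    apply ContinuousOn.intervalIntegrable; rw [huIcc]; exact hx1c
  have hint_q1 : IntervalIntegrable (fun t => q1 t - qt1 t) MeasureTheory.volume 0 τ :=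
    (hq1.sub hqt1).intervalIntegrable 0 τ
  have hint_q2 : IntervalIntegrable (fun t => q2 t - qt2 t) MeasureTheory.volume 0 τ :=
    (hq2.sub hqt2).intervalIntegrable 0 τ
  set I : ℝ := ∫ t in (0:ℝ)..τ, (T1 t - Tt1 t) with hI
  have key1 : ∫ t in (0:ℝ)..τ, ((q1 t - qt1 t) - (α10 + α12) * (T1 t - Tt1 t))
      = C1 * (T1 τ - Tt1 τ) - C1 * (T1 0 - Tt1 0) := by
    apply intervalIntegral.integral_eq_sub_of_hasDerivAt
    · intro t ht
      rw [huIcc] at ht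
      have h2 := ((hdyn1 t ht).sub (hdynt1 t ht)).const_mul C1
      convert h2 using 1
      · rfl
      · rfl
      have h3 : Tt2 t = T2 t := hunc t ht
      rw [h3]
      field_simp
      ring
    · apply ContinuousOn.intervalIntegrable
      rw [huIcc]
      exact ((hq1.sub hqt1).continuousOn).sub (continuousOn_const.mul hx1c)
  have key1' : ∫ t in (0:ℝ)..τ, ((q1 t - qt1 t) - (α10 + α12) * (T1 t - Tt1 t)) = 0 := by
    rw [key1, hfin1, hinit1]; ring
  have hsplit1 := intervalIntegral.integral_sub hint_q1 (hint_x1.const_mul (α10 + α12))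
  rw [key1'] at hsplit1
  have e1 : (∫ t in (0:ℝ)..τ, (q1 t - qt1 t)) = (α10 + α12) * I := by
    rw [intervalIntegral.integral_const_mul] at hsplit1
    linarith [hsplit1]
  have key2 : ∫ t in (0:ℝ)..τ, ((q2 t - qt2 t) + α12 * (T1 t - Tt1 t))
      = C2 * (T2 τ - Tt2 τ) - C2 * (T2 0 - Tt2 0) := by
    apply intervalIntegral.integral_eq_sub_of_hasDerivAt
    · intro t ht
      rw [huIcc] at ht
      have h2 := ((hdyn2 t ht).sub (hdynt2 t ht)).const_mul C2
      convert h2 using 1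
      · rfl
      · rfl
      have h3 : Tt2 t = T2 t := hunc t ht
      rw [h3]
      field_simp
      ring
    · apply ContinuousOn.intervalIntegrable
      rw [huIcc]
      exact ((hq2.sub hqt2).continuousOn).add (continuousOn_const.mul hx1c)
  have key2' : ∫ t in (0:ℝ)..τ, ((q2 t - qt2 t) + α12 * (T1 t - Tt1 t)) = 0 := by
    rw [key2, hfin2, hinit2]; ring
  have hsplit2 := intervalIntegral.integral_add hint_q2 (hint_x1.const_mul α12)
  rw [key2'] at hsplit2
  have e2 : (∫ t in (0:ℝ)..τ, (q2 t - qt2 t)) = -(α12 * I) := by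
    rw [intervalIntegral.integral_const_mul] at hsplit2
    linarith [hsplit2]
  constructor
  · rw [hS1, hS2, e1, e2]; ring
  · rw [hS1, e1]; ring
end

section
/- Suppose the thermal prices are spatially uniform, a_i(t) = a(t) for all zones i. Then the whole-building savings reduce to S = Σ_{i=1}^m ∫_0^τ ( a(t) α_{i0} − C_i a'(t) ) x_i(t) dt; in particular, only the conductances α_{i0} between controlled zones and the outdoors (and the price's rate of change) enter the true savings, and the inter-zone conductances α_{ij} for j ≥ 1 drop out. -/
private lemma sum_antisym_aux (n : ℕ) (α : ℕ → ℕ → ℝ) (hsym : ∀ i j, α i j = α j i)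
    (y : ℕ → ℝ) :
    ∑ i ∈ Finset.Icc 1 n, ∑ j ∈ Finset.Icc 1 n, α i j * (y j - y i) = 0 := by
  have h1 : ∑ i ∈ Finset.Icc 1 n, ∑ j ∈ Finset.Icc 1 n, α i j * (y j - y i)
      = ∑ i ∈ Finset.Icc 1 n, ∑ j ∈ Finset.Icc 1 n, α j i * (y i - y j) := Finset.sum_comm
  have h2 : ∑ i ∈ Finset.Icc 1 n, ∑ j ∈ Finset.Icc 1 n, α j i * (y i - y j)
      = -∑ i ∈ Finset.Icc 1 n, ∑ j ∈ Finset.Icc 1 n, α i j * (y j - y i) := by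
    rw [← Finset.sum_neg_distrib]
    refine Finset.sum_congr rfl fun i _ => ?_
    rw [← Finset.sum_neg_distrib]
    refine Finset.sum_congr rfl fun j _ => ?_
    rw [hsym j i]; ring
  linarith

/-- With spatially uniform thermal prices `a_i(t) = a(t)`, the
whole-building savings reduce to
`S = Σ_{i=1}^m ∫_0^τ ( a(t) α_{i0} − C_i a'(t) ) x_i(t) dt`: only the conductances
between controlled zones and the outdoors (and the price's rate of change) enter the
true savings. -/
theorem uniform_price_whole_building_savings
    (n m : ℕ) (hm : 1 ≤ m) (hmn : m ≤ n)
    (τ : ℝ) (hτ : 0 < τ)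
    (T Tt q qt w : ℕ → ℝ → ℝ)
    (C : ℕ → ℝ) (α : ℕ → ℕ → ℝ) (a : ℝ → ℝ)
    (hC : ∀ i, 0 < C i)
    (hα : ∀ i j, 0 ≤ α i j)
    (hsym : ∀ i j, α i j = α j i)
    (hq : ∀ i, Continuous (q i)) (hqt : ∀ i, Continuous (qt i))
    (ha : ContDiff ℝ 1 a)
    (hdyn : ∀ i ∈ Finset.Icc 1 n, ∀ t ∈ Set.Icc (0 : ℝ) τ,
      HasDerivAt (T i)
        (((∑ j ∈ Finset.range (n + 1), α i j * (T j t - T i t)) + q i t + w i t) / C i) t)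
    (hdynt : ∀ i ∈ Finset.Icc 1 n, ∀ t ∈ Set.Icc (0 : ℝ) τ,
      HasDerivAt (Tt i)
        (((∑ j ∈ Finset.range (n + 1), α i j * (Tt j t - Tt i t)) + qt i t + w i t) / C i) t)
    (hout : ∀ t, Tt 0 t = T 0 t)
    (hunc : ∀ i ∈ Finset.Icc (m + 1) n, ∀ t ∈ Set.Icc (0 : ℝ) τ, Tt i t = T i t)
    (hinit : ∀ i ∈ Finset.Icc 1 n, Tt i 0 = T i 0)
    (hfin : ∀ i ∈ Finset.Icc 1 n, Tt i τ = T i τ) :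
    (∑ i ∈ Finset.Icc 1 n, ∫ t in (0 : ℝ)..τ, a t * (q i t - qt i t))
      = ∑ i ∈ Finset.Icc 1 m, ∫ t in (0 : ℝ)..τ,
          (a t * α i 0 - C i * deriv a t) * (T i t - Tt i t) := by
  have h0τ : (0:ℝ) ≤ τ := hτ.le
  have huIcc : Set.uIcc (0:ℝ) τ = Set.Icc 0 τ := Set.uIcc_of_le h0τ
  have ha_cont : Continuous a := ha.continuous
  have ha'_cont : Continuous (deriv a) := ha.continuous_deriv le_rfl
  have hadiff : ∀ t : ℝ, HasDerivAt a (deriv a t) t := fun t =>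
    ((ha.differentiable one_ne_zero) t).hasDerivAt
  have hrange : Finset.range (n+1) = insert 0 (Finset.Icc 1 n) := by
    ext j
    simp only [Finset.mem_range, Finset.mem_insert, Finset.mem_Icc, Nat.lt_succ_iff]
    omega
  have h0not : (0:ℕ) ∉ Finset.Icc 1 n := by simp
  -- abbreviations (as plain functions to avoid let bindings)
  -- x i t := T i t - Tt i t
  have hxcont : ∀ j ∈ Finset.Icc 1 n, ContinuousOn (fun t => T j t - Tt j t) (Set.Icc 0 τ) :=
    fun j hj t ht =>
      (((hdyn j hj t ht).continuousAt).sub ((hdynt j hj t ht).continuousAt)).continuousWithinAt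
  -- derivative of x i
  have hxD : ∀ i ∈ Finset.Icc 1 n, ∀ t ∈ Set.Icc (0:ℝ) τ,
      HasDerivAt (fun s => T i s - Tt i s)
        (((∑ j ∈ Finset.Icc 1 n, α i j * ((T j t - Tt j t) - (T i t - Tt i t)))
            - α i 0 * (T i t - Tt i t) + (q i t - qt i t)) / C i) t := by
    intro i hi t ht
    have h := (hdyn i hi t ht).sub (hdynt i hi t ht)
    refine h.congr_deriv ?_
    rw [div_sub_div_same]
    congr 1
    have key : (∑ j ∈ Finset.range (n+1), α i j * (T j t - T i t))
        - (∑ j ∈ Finset.range (n+1), α i j * (Tt j t - Tt i t))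
        = (∑ j ∈ Finset.Icc 1 n, α i j * ((T j t - Tt j t) - (T i t - Tt i t)))
            - α i 0 * (T i t - Tt i t) := by
      rw [← Finset.sum_sub_distrib, hrange, Finset.sum_insert h0not, hout t]
      have hcongr : ∑ j ∈ Finset.Icc 1 n,
          (α i j * (T j t - T i t) - α i j * (Tt j t - Tt i t))
          = ∑ j ∈ Finset.Icc 1 n, α i j * ((T j t - Tt j t) - (T i t - Tt i t)) :=
        Finset.sum_congr rfl fun j _ => by ring
      rw [hcongr]; ring
    linarith [key]
  -- integrability helpers
  have hsumc : ∀ i ∈ Finset.Icc 1 n, ContinuousOn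
      (fun t => ∑ j ∈ Finset.Icc 1 n, α i j * ((T j t - Tt j t) - (T i t - Tt i t)))
      (Set.Icc 0 τ) := fun i hi =>
    continuousOn_finset_sum _ fun j hj =>
      continuousOn_const.mul ((hxcont j hj).sub (hxcont i hi))
  have hDc : ∀ i ∈ Finset.Icc 1 n, ContinuousOn
      (fun t => ((∑ j ∈ Finset.Icc 1 n, α i j * ((T j t - Tt j t) - (T i t - Tt i t)))
          - α i 0 * (T i t - Tt i t) + (q i t - qt i t)) / C i) (Set.Icc 0 τ) := fun i hi =>
    (((hsumc i hi).sub (continuousOn_const.mul (hxcont i hi))).add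
      (((hq i).continuousOn).sub ((hqt i).continuousOn))).div_const (C i)
  have hφc : ∀ i ∈ Finset.Icc 1 n, ContinuousOn
      (fun t => C i * (deriv a t * (T i t - Tt i t) +
        a t * (((∑ j ∈ Finset.Icc 1 n, α i j * ((T j t - Tt j t) - (T i t - Tt i t)))
          - α i 0 * (T i t - Tt i t) + (q i t - qt i t)) / C i))) (Set.Icc 0 τ) := fun i hi =>
    continuousOn_const.mul ((ha'_cont.continuousOn.mul (hxcont i hi)).add
      (ha_cont.continuousOn.mul (hDc i hi)))
  have hρc : ∀ i ∈ Finset.Icc 1 n, ContinuousOn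
      (fun t => -(C i * deriv a t * (T i t - Tt i t))
        - a t * ((∑ j ∈ Finset.Icc 1 n, α i j * ((T j t - Tt j t) - (T i t - Tt i t)))
            - α i 0 * (T i t - Tt i t))) (Set.Icc 0 τ) := fun i hi =>
    (((continuousOn_const.mul ha'_cont.continuousOn).mul (hxcont i hi)).neg).sub
      (ha_cont.continuousOn.mul ((hsumc i hi).sub (continuousOn_const.mul (hxcont i hi))))
  have hρint : ∀ i ∈ Finset.Icc 1 n, IntervalIntegrable
      (fun t => -(C i * deriv a t * (T i t - Tt i t))
        - a t * ((∑ j ∈ Finset.Icc 1 n, α i j * ((T j t - Tt j t) - (T i t - Tt i t)))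
            - α i 0 * (T i t - Tt i t))) MeasureTheory.volume 0 τ := by
    intro i hi
    apply ContinuousOn.intervalIntegrable
    rw [huIcc]; exact hρc i hi
  have hφint : ∀ i ∈ Finset.Icc 1 n, IntervalIntegrable
      (fun t => C i * (deriv a t * (T i t - Tt i t) +
        a t * (((∑ j ∈ Finset.Icc 1 n, α i j * ((T j t - Tt j t) - (T i t - Tt i t)))
          - α i 0 * (T i t - Tt i t) + (q i t - qt i t)) / C i))) MeasureTheory.volume 0 τ := by
    intro i hi
    apply ContinuousOn.intervalIntegrable
    rw [huIcc]; exact hφc i hi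
  have hgc : ∀ i ∈ Finset.Icc 1 n, ContinuousOn
      (fun t => (a t * α i 0 - C i * deriv a t) * (T i t - Tt i t)) (Set.Icc 0 τ) := fun i hi =>
    ((ha_cont.continuousOn.mul continuousOn_const).sub
      (continuousOn_const.mul ha'_cont.continuousOn)).mul (hxcont i hi)
  have hgint : ∀ i ∈ Finset.Icc 1 n, IntervalIntegrable
      (fun t => (a t * α i 0 - C i * deriv a t) * (T i t - Tt i t))
      MeasureTheory.volume 0 τ := by
    intro i hi
    apply ContinuousOn.intervalIntegrable
    rw [huIcc]; exact hgc i hi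
  -- FTC : the exact derivative integrates to zero
  have hFTC : ∀ i ∈ Finset.Icc 1 n,
      (∫ t in (0:ℝ)..τ, C i * (deriv a t * (T i t - Tt i t) +
        a t * (((∑ j ∈ Finset.Icc 1 n, α i j * ((T j t - Tt j t) - (T i t - Tt i t)))
          - α i 0 * (T i t - Tt i t) + (q i t - qt i t)) / C i))) = 0 := by
    intro i hi
    have hderiv : ∀ t ∈ Set.uIcc (0:ℝ) τ,
        HasDerivAt (fun s => C i * (a s * (T i s - Tt i s)))
          (C i * (deriv a t * (T i t - Tt i t) +
            a t * (((∑ j ∈ Finset.Icc 1 n, α i j * ((T j t - Tt j t) - (T i t - Tt i t)))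
              - α i 0 * (T i t - Tt i t) + (q i t - qt i t)) / C i))) t := by
      intro t ht
      rw [huIcc] at ht
      exact ((hadiff t).mul (hxD i hi t ht)).const_mul (C i)
    rw [intervalIntegral.integral_eq_sub_of_hasDerivAt hderiv (hφint i hi)]
    rw [hfin i hi, hinit i hi]
    ring
  -- per-zone identity
  have hSi : ∀ i ∈ Finset.Icc 1 n,
      (∫ t in (0:ℝ)..τ, a t * (q i t - qt i t))
        = ∫ t in (0:ℝ)..τ, (-(C i * deriv a t * (T i t - Tt i t))
            - a t * ((∑ j ∈ Finset.Icc 1 n, α i j * ((T j t - Tt j t) - (T i t - Tt i t)))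
                - α i 0 * (T i t - Tt i t))) := by
    intro i hi
    have hCne : C i ≠ 0 := (hC i).ne'
    have hpt : ∀ t : ℝ, a t * (q i t - qt i t)
        = (C i * (deriv a t * (T i t - Tt i t) +
            a t * (((∑ j ∈ Finset.Icc 1 n, α i j * ((T j t - Tt j t) - (T i t - Tt i t)))
              - α i 0 * (T i t - Tt i t) + (q i t - qt i t)) / C i)))
          + (-(C i * deriv a t * (T i t - Tt i t))
            - a t * ((∑ j ∈ Finset.Icc 1 n, α i j * ((T j t - Tt j t) - (T i t - Tt i t)))
                - α i 0 * (T i t - Tt i t))) := by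
      intro t
      field_simp
      ring
    have : (∫ t in (0:ℝ)..τ, a t * (q i t - qt i t))
        = ∫ t in (0:ℝ)..τ,
          ((C i * (deriv a t * (T i t - Tt i t) +
            a t * (((∑ j ∈ Finset.Icc 1 n, α i j * ((T j t - Tt j t) - (T i t - Tt i t)))
              - α i 0 * (T i t - Tt i t) + (q i t - qt i t)) / C i)))
          + (-(C i * deriv a t * (T i t - Tt i t))
            - a t * ((∑ j ∈ Finset.Icc 1 n, α i j * ((T j t - Tt j t) - (T i t - Tt i t)))
                - α i 0 * (T i t - Tt i t)))) :=
      intervalIntegral.integral_congr fun t _ => hpt t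
    rw [this, intervalIntegral.integral_add (hφint i hi) (hρint i hi), hFTC i hi, zero_add]
  -- sum it up
  have hsub : Finset.Icc 1 m ⊆ Finset.Icc 1 n := Finset.Icc_subset_Icc_right hmn
  have hvanish : ∀ i ∈ Finset.Icc 1 n, i ∉ Finset.Icc 1 m →
      (∫ t in (0:ℝ)..τ, (a t * α i 0 - C i * deriv a t) * (T i t - Tt i t)) = 0 := by
    intro i hi hnot
    have him : i ∈ Finset.Icc (m+1) n := by
      simp only [Finset.mem_Icc] at hi hnot ⊢
      omega
    have hEq : Set.EqOn (fun t => (a t * α i 0 - C i * deriv a t) * (T i t - Tt i t))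
        (fun _ => (0:ℝ)) (Set.uIcc 0 τ) := by
      rw [huIcc]
      intro t ht
      simp only
      rw [hunc i him t ht]
      ring
    rw [intervalIntegral.integral_congr hEq, intervalIntegral.integral_zero]
  have hpt2 : ∀ t : ℝ,
      (∑ i ∈ Finset.Icc 1 n, (-(C i * deriv a t * (T i t - Tt i t))
        - a t * ((∑ j ∈ Finset.Icc 1 n, α i j * ((T j t - Tt j t) - (T i t - Tt i t)))
            - α i 0 * (T i t - Tt i t))))
      = ∑ i ∈ Finset.Icc 1 n, (a t * α i 0 - C i * deriv a t) * (T i t - Tt i t) := by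
    intro t
    have h0 := sum_antisym_aux n α hsym (fun j => T j t - Tt j t)
    have hterm : ∀ i ∈ Finset.Icc 1 n,
        (-(C i * deriv a t * (T i t - Tt i t))
          - a t * ((∑ j ∈ Finset.Icc 1 n, α i j * ((T j t - Tt j t) - (T i t - Tt i t)))
              - α i 0 * (T i t - Tt i t)))
        = (a t * α i 0 - C i * deriv a t) * (T i t - Tt i t)
          - a t * (∑ j ∈ Finset.Icc 1 n, α i j * ((T j t - Tt j t) - (T i t - Tt i t))) :=
      fun i _ => by ring
    rw [Finset.sum_congr rfl hterm, Finset.sum_sub_distrib, ← Finset.mul_sum, h0,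
      mul_zero, sub_zero]
  calc (∑ i ∈ Finset.Icc 1 n, ∫ t in (0:ℝ)..τ, a t * (q i t - qt i t))
      = ∑ i ∈ Finset.Icc 1 n, ∫ t in (0:ℝ)..τ, (-(C i * deriv a t * (T i t - Tt i t))
          - a t * ((∑ j ∈ Finset.Icc 1 n, α i j * ((T j t - Tt j t) - (T i t - Tt i t)))
              - α i 0 * (T i t - Tt i t))) := Finset.sum_congr rfl hSi
    _ = ∫ t in (0:ℝ)..τ, ∑ i ∈ Finset.Icc 1 n, (-(C i * deriv a t * (T i t - Tt i t))
          - a t * ((∑ j ∈ Finset.Icc 1 n, α i j * ((T j t - Tt j t) - (T i t - Tt i t)))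
              - α i 0 * (T i t - Tt i t))) :=
        (intervalIntegral.integral_finset_sum fun i hi => hρint i hi).symm
    _ = ∫ t in (0:ℝ)..τ, ∑ i ∈ Finset.Icc 1 n,
          (a t * α i 0 - C i * deriv a t) * (T i t - Tt i t) :=
        intervalIntegral.integral_congr fun t _ => hpt2 t
    _ = ∑ i ∈ Finset.Icc 1 n, ∫ t in (0:ℝ)..τ,
          (a t * α i 0 - C i * deriv a t) * (T i t - Tt i t) :=
        intervalIntegral.integral_finset_sum fun i hi => hgint i hi
    _ = ∑ i ∈ Finset.Icc 1 m, ∫ t in (0:ℝ)..τ,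
          (a t * α i 0 - C i * deriv a t) * (T i t - Tt i t) :=
        (Finset.sum_subset hsub hvanish).symm
end
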